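/- arXiv:1311.2859 — 4 statements merged into one kernel-verified Lean document; each statement's English description precedes it below -/
import Mathlib

section
/- Let r > 1, s = r/(r−1), let ρ₀ ∈ L^r(Ω) with ρ₀ ≢ 0, let P be the set of all rearrangements of ρ₀, and let q ∈ L^s(Ω) with q ≢ 0. If there is an increasing function ξ : ℝ → ℝ such that ξ∘q ∈ P, then for every ρ ∈ P one has ∫_Ω ρ q dx ≤ ∫_Ω ξ(q) q dx, and ξ∘q is the unique maximizer of ρ ↦ ∫_Ω ρ q dx over P (unique up to equality almost everywhere). -/
/-!
Layer cake and the bathtub principle. Writing `a - b = ∫ c, (1[c ≤ a] - 1[c ≤ b])` and using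
Fubini, `∫ (ξ ∘ q - ρ) q` becomes `∫ c, (∫_{ρ < c ≤ ξ ∘ q} q - ∫_{ξ ∘ q < c ≤ ρ} q)`. For each `c`
the two sets have equal measure, since `ρ` and `ξ ∘ q` are equimeasurable, and since `ξ` is
monotone every value of `q` on the first set exceeds every value on the second; so the inner
difference is nonnegative, and positive unless both sets are null. In the case of equality these
sets are therefore null for almost every `c`, and Tonelli on the region between the graphs of `ρ`
and `ξ ∘ q` gives `ρ = ξ ∘ q` a.e. Hölder's inequality supplies the integrability of `ρ q`.
-/
open MeasureTheory Set

namespace Rearrangement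

variable {α : Type*} [MeasurableSpace α] {μ : Measure α}

lemma setIntegral_pos_of_forall_pos {f : α → ℝ} {s : Set α} (hs : MeasurableSet s)
    (hμs : μ s ≠ 0) (hf : IntegrableOn f s μ) (hpos : ∀ x ∈ s, 0 < f x) :
    0 < ∫ x in s, f x ∂μ := by
  have hnonneg : 0 ≤ᵐ[μ.restrict s] f := ae_restrict_of_forall_mem hs fun x hx => (hpos x hx).le
  have hsupp : Function.support f ∩ s = s := inter_eq_right.2 fun x hx => (hpos x hx).ne'
  rw [setIntegral_pos_iff_support_of_nonneg_ae hnonneg hf, hsupp]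
  exact pos_iff_ne_zero.2 hμs

section Bathtub

variable [IsFiniteMeasure μ] {q : α → ℝ} {X Y : Set α}

lemma setIntegral_lt_setIntegral_of_forall_lt (hq : Integrable q μ) (hX : MeasurableSet X)
    (hY : MeasurableSet Y) (hXY : μ X = μ Y) (hX0 : μ X ≠ 0)
    (hlt : ∀ x ∈ X, ∀ y ∈ Y, q y < q x) : ∫ y in Y, q y ∂μ < ∫ x in X, q x ∂μ := by
  have hY0 : μ Y ≠ 0 := hXY ▸ hX0
  obtain ⟨x₀, hx₀⟩ := nonempty_of_measure_ne_zero hX0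
  obtain ⟨y₀, hy₀⟩ := nonempty_of_measure_ne_zero hY0
  set t := sSup (q '' Y)
  have hYt : ∀ y ∈ Y, q y ≤ t := fun y hy =>
    le_csSup ⟨q x₀, forall_mem_image.2 fun y hy => (hlt x₀ hx₀ y hy).le⟩ (mem_image_of_mem q hy)
  have htX : ∀ x ∈ X, t ≤ q x := fun x hx =>
    csSup_le ⟨q y₀, mem_image_of_mem q hy₀⟩ (forall_mem_image.2 fun y hy => (hlt x hx y hy).le)
  have hY_eq : ∫ y in Y, q y ∂μ = μ.real Y * t - ∫ y in Y, (t - q y) ∂μ := by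
    rw [integral_sub (integrable_const t) hq.integrableOn, setIntegral_const, smul_eq_mul]
    ring
  have hX_eq : ∫ x in X, q x ∂μ = μ.real X * t + ∫ x in X, (q x - t) ∂μ := by
    rw [integral_sub hq.integrableOn (integrable_const t), setIntegral_const, smul_eq_mul]
    ring
  have hY_gap : 0 ≤ ∫ y in Y, (t - q y) ∂μ :=
    setIntegral_nonneg hY fun y hy => sub_nonneg.2 (hYt y hy)
  have hX_gap : 0 ≤ ∫ x in X, (q x - t) ∂μ :=
    setIntegral_nonneg hX fun x hx => sub_nonneg.2 (htX x hx)
  -- If `t` is attained on `X`, then `q < t` on `Y`; otherwise `t < q` on `X`.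
  have hgap : 0 < ∫ y in Y, (t - q y) ∂μ ∨ 0 < ∫ x in X, (q x - t) ∂μ := by
    by_cases hatt : ∃ x ∈ X, q x = t
    · obtain ⟨x, hx, hxt⟩ := hatt
      exact .inl <| setIntegral_pos_of_forall_pos hY hY0
        ((integrable_const t).sub hq.integrableOn)
        fun y hy => sub_pos.2 (hxt ▸ hlt x hx y hy)
    · push Not at hatt
      exact .inr <| setIntegral_pos_of_forall_pos hX hX0
        (hq.integrableOn.sub (integrable_const t))
        fun x hx => sub_pos.2 ((htX x hx).lt_of_ne (hatt x hx).symm)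
  have hreal : μ.real X = μ.real Y := by rw [measureReal_def, measureReal_def, hXY]
  rw [hY_eq, hX_eq, hreal]
  rcases hgap with h | h <;> linarith

lemma setIntegral_le_setIntegral_of_forall_lt (hq : Integrable q μ) (hX : MeasurableSet X)
    (hY : MeasurableSet Y) (hXY : μ X = μ Y) (hlt : ∀ x ∈ X, ∀ y ∈ Y, q y < q x) :
    ∫ y in Y, q y ∂μ ≤ ∫ x in X, q x ∂μ := by
  by_cases hX0 : μ X = 0
  · rw [Measure.restrict_eq_zero.2 hX0, Measure.restrict_eq_zero.2 (hXY ▸ hX0)]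
  · exact (setIntegral_lt_setIntegral_of_forall_lt hq hX hY hXY hX0 hlt).le

end Bathtub

section LayerCake

variable {f g q : α → ℝ}

lemma measurableSet_Ioc_between (hf : Measurable f) (hg : Measurable g) :
    MeasurableSet {p : α × ℝ | p.2 ∈ Ioc (g p.1) (f p.1)} :=
  (measurableSet_lt (hg.comp measurable_fst) measurable_snd).inter
    (measurableSet_le measurable_snd (hf.comp measurable_fst))

lemma measurableSet_setOf_mem_Ioc (hf : Measurable f) (hg : Measurable g) (c : ℝ) :
    MeasurableSet {x | c ∈ Ioc (g x) (f x)} :=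
  (measurableSet_lt hg measurable_const).inter (measurableSet_le measurable_const hf)

lemma integrable_max_sub_mul (hf : Measurable f) (hg : Measurable g) (hq : Measurable q)
    (hfgq : Integrable (fun x => (f x - g x) * q x) μ) :
    Integrable (fun x => max (f x - g x) 0 * q x) μ := by
  refine hfgq.mono (((hf.sub hg).max measurable_const).mul hq).aestronglyMeasurable
    (.of_forall fun x => ?_)
  rw [norm_mul, norm_mul, Real.norm_of_nonneg (le_max_right _ _)]
  gcongr
  exact max_le (le_abs_self _) (abs_nonneg _)

lemma integrable_sub_mul (hf : Integrable (fun x => f x * q x) μ)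
    (hg : Integrable (fun x => g x * q x) μ) : Integrable (fun x => (f x - g x) * q x) μ :=
  (hf.sub hg).congr (.of_forall fun x => (sub_mul (f x) (g x) (q x)).symm)

variable [SFinite μ]

lemma integral_max_sub_mul_eq_integral_setIntegral (hf : Measurable f) (hg : Measurable g)
    (hq : Measurable q) (hfgq : Integrable (fun x => max (f x - g x) 0 * q x) μ) :
    Integrable (fun c => ∫ x in {x | c ∈ Ioc (g x) (f x)}, q x ∂μ) ∧
      ∫ x, max (f x - g x) 0 * q x ∂μ = ∫ c, ∫ x in {x | c ∈ Ioc (g x) (f x)}, q x ∂μ := by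
  set S := {p : α × ℝ | p.2 ∈ Ioc (g p.1) (f p.1)}
  have hS : MeasurableSet S := measurableSet_Ioc_between hf hg
  set F : α × ℝ → ℝ := S.indicator fun p => q p.1
  have hF_slice (x : α) : (fun c => F (x, c)) = (Ioc (g x) (f x)).indicator fun _ => q x := rfl
  have hF_slice' (c : ℝ) : (fun x => F (x, c)) = {x | c ∈ Ioc (g x) (f x)}.indicator q := rfl
  have hF_int_slice (x : α) : ∫ c, F (x, c) = max (f x - g x) 0 * q x := by
    rw [hF_slice, integral_indicator_const _ measurableSet_Ioc, Real.volume_real_Ioc, smul_eq_mul]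
  have hF_meas : AEStronglyMeasurable F (μ.prod volume) :=
    ((hq.comp measurable_fst).indicator hS).aestronglyMeasurable
  have hF : Integrable F (μ.prod volume) := by
    rw [integrable_prod_iff hF_meas]
    refine ⟨.of_forall fun x => ?_, hfgq.norm.congr (.of_forall fun x => ?_)⟩
    · rw [hF_slice, integrable_indicator_iff measurableSet_Ioc]
      exact integrableOn_const (by simp)
    · have hnorm : (fun c => ‖F (x, c)‖) = (Ioc (g x) (f x)).indicator fun _ => ‖q x‖ :=
        funext fun c => norm_indicator_eq_indicator_norm _ _
      dsimp only
      rw [hnorm, integral_indicator_const _ measurableSet_Ioc, Real.volume_real_Ioc, smul_eq_mul,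
        norm_mul, Real.norm_of_nonneg (le_max_right _ _)]
  have hF_int_slice' (c : ℝ) : ∫ x, F (x, c) ∂μ = ∫ x in {x | c ∈ Ioc (g x) (f x)}, q x ∂μ := by
    rw [hF_slice', integral_indicator (measurableSet_setOf_mem_Ioc hf hg c)]
  refine ⟨?_, ?_⟩
  · simpa only [hF_int_slice'] using hF.integral_prod_right
  · simp_rw [← hF_int_slice, ← hF_int_slice']
    rw [← integral_prod F hF, integral_prod_symm F hF]

lemma integral_sub_mul_eq_integral_layer (hf : Measurable f) (hg : Measurable g)
    (hq : Measurable q) (hfgq : Integrable (fun x => (f x - g x) * q x) μ) :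
    Integrable (fun c => ∫ x in {x | c ∈ Ioc (g x) (f x)}, q x ∂μ -
        ∫ x in {x | c ∈ Ioc (f x) (g x)}, q x ∂μ) ∧
      ∫ x, (f x - g x) * q x ∂μ = ∫ c, (∫ x in {x | c ∈ Ioc (g x) (f x)}, q x ∂μ -
        ∫ x in {x | c ∈ Ioc (f x) (g x)}, q x ∂μ) := by
  have hgfq : Integrable (fun x => (g x - f x) * q x) μ := by
    refine hfgq.neg.congr (.of_forall fun x => ?_)
    simp only [Pi.neg_apply]
    ring
  have hfg := integrable_max_sub_mul hf hg hq hfgq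
  have hgf := integrable_max_sub_mul hg hf hq hgfq
  obtain ⟨hint_fg, heq_fg⟩ := integral_max_sub_mul_eq_integral_setIntegral hf hg hq hfg
  obtain ⟨hint_gf, heq_gf⟩ := integral_max_sub_mul_eq_integral_setIntegral hg hf hq hgf
  refine ⟨hint_fg.sub hint_gf, ?_⟩
  rw [integral_sub hint_fg hint_gf, ← heq_fg, ← heq_gf, ← integral_sub hfg hgf]
  congr 1 with x
  rw [← sub_mul, ← neg_sub (f x), max_zero_sub_max_neg_zero_eq_self]

lemma ae_le_of_ae_measure_setOf_mem_Ioc_eq_zero (hf : Measurable f) (hg : Measurable g)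
    (h : ∀ᵐ c, μ {x | c ∈ Ioc (g x) (f x)} = 0) : ∀ᵐ x ∂μ, f x ≤ g x := by
  have hS := measurableSet_Ioc_between hf hg
  have hnull : μ.prod volume {p : α × ℝ | p.2 ∈ Ioc (g p.1) (f p.1)} = 0 := by
    rw [Measure.prod_apply_symm hS]
    exact (lintegral_congr_ae h).trans lintegral_zero
  filter_upwards [(Measure.measure_prod_null hS).1 hnull] with x hx
  change volume (Ioc (g x) (f x)) = 0 at hx
  rwa [Real.volume_Ioc, ENNReal.ofReal_eq_zero, sub_nonpos] at hx

end LayerCake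

section Maximization

variable [IsFiniteMeasure μ] {f g q ρ : α → ℝ} {ξ : ℝ → ℝ}

lemma measure_setOf_mem_Ioc_eq (hf : Measurable f) (hg : Measurable g) {c : ℝ}
    (h : μ {x | c ≤ g x} = μ {x | c ≤ f x}) :
    μ {x | c ∈ Ioc (g x) (f x)} = μ {x | c ∈ Ioc (f x) (g x)} := by
  have hdiff (f g : α → ℝ) : {x | c ∈ Ioc (g x) (f x)} = {x | c ≤ f x} \ {x | c ≤ g x} := by
    ext x
    simp [and_comm]
  rw [hdiff, hdiff]
  exact measure_sdiff_symm (measurableSet_le measurable_const hf).nullMeasurableSet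
    (measurableSet_le measurable_const hg).nullMeasurableSet h.symm (measure_ne_top μ _)

lemma setIntegral_Ioc_lt_setIntegral_Ioc (hξ : Monotone ξ) (hqm : Measurable q)
    (hq : Integrable q μ) (hρ : Measurable ρ) {c : ℝ}
    (hc : μ {x | c ≤ ρ x} = μ {x | c ≤ ξ (q x)}) (hc0 : μ {x | c ∈ Ioc (ρ x) (ξ (q x))} ≠ 0) :
    ∫ x in {x | c ∈ Ioc (ξ (q x)) (ρ x)}, q x ∂μ <
      ∫ x in {x | c ∈ Ioc (ρ x) (ξ (q x))}, q x ∂μ := by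
  have hf : Measurable fun x => ξ (q x) := hξ.measurable.comp hqm
  exact setIntegral_lt_setIntegral_of_forall_lt hq (measurableSet_setOf_mem_Ioc hf hρ c)
    (measurableSet_setOf_mem_Ioc hρ hf c) (measure_setOf_mem_Ioc_eq hf hρ hc) hc0
    fun x hx y hy => hξ.reflect_lt (hy.1.trans_le hx.2)

lemma setIntegral_Ioc_le_setIntegral_Ioc (hξ : Monotone ξ) (hqm : Measurable q)
    (hq : Integrable q μ) (hρ : Measurable ρ) {c : ℝ}
    (hc : μ {x | c ≤ ρ x} = μ {x | c ≤ ξ (q x)}) :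
    ∫ x in {x | c ∈ Ioc (ξ (q x)) (ρ x)}, q x ∂μ ≤
      ∫ x in {x | c ∈ Ioc (ρ x) (ξ (q x))}, q x ∂μ := by
  have hf : Measurable fun x => ξ (q x) := hξ.measurable.comp hqm
  exact setIntegral_le_setIntegral_of_forall_lt hq (measurableSet_setOf_mem_Ioc hf hρ c)
    (measurableSet_setOf_mem_Ioc hρ hf c) (measure_setOf_mem_Ioc_eq hf hρ hc)
    fun x hx y hy => hξ.reflect_lt (hy.1.trans_le hx.2)

theorem integral_mul_le_integral_monotone_comp_mul (hξ : Monotone ξ) (hqm : Measurable q)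
    (hq : Integrable q μ) (hρ : Measurable ρ) (hρq : Integrable (fun x => ρ x * q x) μ)
    (hξq : Integrable (fun x => ξ (q x) * q x) μ)
    (hdist : ∀ c, μ {x | c ≤ ρ x} = μ {x | c ≤ ξ (q x)}) :
    ∫ x, ρ x * q x ∂μ ≤ ∫ x, ξ (q x) * q x ∂μ := by
  obtain ⟨-, hlayer⟩ := integral_sub_mul_eq_integral_layer (hξ.measurable.comp hqm) hρ hqm
    (integrable_sub_mul hξq hρq)
  have hnonneg : 0 ≤ ∫ x, (ξ (q x) - ρ x) * q x ∂μ := hlayer ▸ integral_nonneg fun c =>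
    sub_nonneg.2 (setIntegral_Ioc_le_setIntegral_Ioc hξ hqm hq hρ (hdist c))
  simp only [sub_mul] at hnonneg
  rw [integral_sub hξq hρq] at hnonneg
  linarith

theorem ae_eq_monotone_comp_of_integral_mul_eq (hξ : Monotone ξ) (hqm : Measurable q)
    (hq : Integrable q μ) (hρ : Measurable ρ) (hρq : Integrable (fun x => ρ x * q x) μ)
    (hξq : Integrable (fun x => ξ (q x) * q x) μ)
    (hdist : ∀ c, μ {x | c ≤ ρ x} = μ {x | c ≤ ξ (q x)})
    (heq : ∫ x, ρ x * q x ∂μ = ∫ x, ξ (q x) * q x ∂μ) :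
    ρ =ᵐ[μ] fun x => ξ (q x) := by
  have hf : Measurable fun x => ξ (q x) := hξ.measurable.comp hqm
  obtain ⟨hint, hlayer⟩ := integral_sub_mul_eq_integral_layer hf hρ hqm
    (integrable_sub_mul hξq hρq)
  have hzero : ∫ x, (ξ (q x) - ρ x) * q x ∂μ = 0 := by
    simp only [sub_mul]
    rw [integral_sub hξq hρq, heq, sub_self]
  rw [hlayer, integral_eq_zero_iff_of_nonneg (fun c => sub_nonneg.2
    (setIntegral_Ioc_le_setIntegral_Ioc hξ hqm hq hρ (hdist c))) hint] at hzero
  have hX : ∀ᵐ c, μ {x | c ∈ Ioc (ρ x) (ξ (q x))} = 0 := hzero.mono fun c hc => by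
    by_contra hc0
    exact (setIntegral_Ioc_lt_setIntegral_Ioc hξ hqm hq hρ (hdist c) hc0).ne
      (sub_eq_zero.1 hc).symm
  have hY : ∀ᵐ c, μ {x | c ∈ Ioc (ξ (q x)) (ρ x)} = 0 :=
    hX.mono fun c hc => measure_setOf_mem_Ioc_eq hf hρ (hdist c) ▸ hc
  filter_upwards [ae_le_of_ae_measure_setOf_mem_Ioc_eq_zero hf hρ hX,
    ae_le_of_ae_measure_setOf_mem_Ioc_eq_zero hρ hf hY] with x hξρ hρξ
  exact le_antisymm hρξ hξρ

end Maximization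

section Equimeasurable

variable {f g : α → ℝ}

lemma restrict_setOf_le_eq {Ω : Set α} (hf : AEMeasurable f (μ.restrict Ω)) (t : ℝ) :
    μ.restrict Ω {x | t ≤ f x} = μ {x ∈ Ω | t ≤ f x} := by
  rw [Measure.restrict_apply₀ (nullMeasurableSet_le aemeasurable_const hf), inter_comm]
  rfl

variable [IsFiniteMeasure μ]

lemma map_eq_of_forall_measure_le_eq (hf : AEMeasurable f μ) (hg : AEMeasurable g μ)
    (h : ∀ t, μ {x | t ≤ f x} = μ {x | t ≤ g x}) : μ.map f = μ.map g :=
  Measure.ext_of_Ici _ _ fun t => by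
    rw [Measure.map_apply_of_aemeasurable hf measurableSet_Ici,
      Measure.map_apply_of_aemeasurable hg measurableSet_Ici]
    exact h t

lemma memLp_of_forall_measure_le_eq {p : ENNReal} (hf : AEMeasurable f μ) (hg : MemLp g p μ)
    (h : ∀ t, μ {x | t ≤ f x} = μ {x | t ≤ g x}) : MemLp f p μ := by
  have hmap := map_eq_of_forall_measure_le_eq hf hg.1.aemeasurable h
  have hg_map := (memLp_map_measure_iff aestronglyMeasurable_id hg.1.aemeasurable).2 hg
  rw [← hmap] at hg_map
  exact (memLp_map_measure_iff aestronglyMeasurable_id hf).1 hg_map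

end Equimeasurable

end Rearrangement

open Rearrangement

theorem stmt3_general {N : ℕ}
    (Ω : Set (EuclideanSpace ℝ (Fin N)))
    (hΩ_bd : Bornology.IsBounded Ω)
    (p s : ℝ) (hp : 1 < p) (hs : s = p / (p - 1))
    (ρ₀ : EuclideanSpace ℝ (Fin N) → ℝ)
    (hρ₀_Lp : MemLp ρ₀ (ENNReal.ofReal p) (volume.restrict Ω))
    (q : EuclideanSpace ℝ (Fin N) → ℝ) (hq_meas : Measurable q)
    (hq_Ls : MemLp q (ENNReal.ofReal s) (volume.restrict Ω))
    (ξ : ℝ → ℝ) (hξ_mono : Monotone ξ)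
    (hξq_rearr : ∀ t : ℝ,
      volume {x ∈ Ω | t ≤ ξ (q x)} = volume {x ∈ Ω | t ≤ ρ₀ x}) :
    (∀ ρ : EuclideanSpace ℝ (Fin N) → ℝ, Measurable ρ →
      (∀ t : ℝ, volume {x ∈ Ω | t ≤ ρ x} = volume {x ∈ Ω | t ≤ ρ₀ x}) →
      ∫ x in Ω, ρ x * q x ≤ ∫ x in Ω, ξ (q x) * q x) ∧
    (∀ ρ : EuclideanSpace ℝ (Fin N) → ℝ, Measurable ρ →
      (∀ t : ℝ, volume {x ∈ Ω | t ≤ ρ x} = volume {x ∈ Ω | t ≤ ρ₀ x}) →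
      (∫ x in Ω, ρ x * q x) = ∫ x in Ω, ξ (q x) * q x →
      ρ =ᵐ[volume.restrict Ω] fun x => ξ (q x)) := by
  have : IsFiniteMeasure (volume.restrict Ω) := isFiniteMeasure_restrict.2 hΩ_bd.measure_lt_top.ne
  have hps : p.HolderConjugate s := (Real.holderConjugate_iff_eq_conjExponent hp).2 hs
  have := hps.ennrealOfReal
  have hq : Integrable q (volume.restrict Ω) :=
    hq_Ls.integrable (ENNReal.one_le_ofReal.2 hps.symm.lt.le)
  have hdist {ρ : EuclideanSpace ℝ (Fin N) → ℝ} (hρ : Measurable ρ)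
      (hρ_rearr : ∀ t : ℝ, volume {x ∈ Ω | t ≤ ρ x} = volume {x ∈ Ω | t ≤ ρ₀ x}) (t : ℝ) :
      volume.restrict Ω {x | t ≤ ρ x} = volume.restrict Ω {x | t ≤ ρ₀ x} := by
    rw [restrict_setOf_le_eq hρ.aemeasurable, restrict_setOf_le_eq hρ₀_Lp.1.aemeasurable,
      hρ_rearr]
  have hintegrable {ρ : EuclideanSpace ℝ (Fin N) → ℝ} (hρ : Measurable ρ)
      (hρ_rearr : ∀ t : ℝ, volume {x ∈ Ω | t ≤ ρ x} = volume {x ∈ Ω | t ≤ ρ₀ x}) :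
      Integrable (fun x => ρ x * q x) (volume.restrict Ω) :=
    (memLp_of_forall_measure_le_eq hρ.aemeasurable hρ₀_Lp (hdist hρ hρ_rearr)).integrable_mul hq_Ls
  have hf : Measurable fun x => ξ (q x) := hξ_mono.measurable.comp hq_meas
  refine ⟨fun ρ hρ hρ_rearr => ?_, fun ρ hρ hρ_rearr heq => ?_⟩
  · exact integral_mul_le_integral_monotone_comp_mul hξ_mono hq_meas hq hρ
      (hintegrable hρ hρ_rearr) (hintegrable hf hξq_rearr)
      fun t => (hdist hρ hρ_rearr t).trans (hdist hf hξq_rearr t).symm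
  · exact ae_eq_monotone_comp_of_integral_mul_eq hξ_mono hq_meas hq hρ
      (hintegrable hρ hρ_rearr) (hintegrable hf hξq_rearr)
      (fun t => (hdist hρ hρ_rearr t).trans (hdist hf hξq_rearr t).symm) heq

/-- Burton's rearrangement lemma, maximization. Let `p > 1`,
`s = p/(p-1)`, `ρ₀ ∈ L^p(Ω)` nontrivial, `q ∈ L^s(Ω)` nontrivial, and suppose there is an
increasing function `ξ : ℝ → ℝ` with `ξ ∘ q` a rearrangement of `ρ₀`. Then
`∫_Ω ρ q ≤ ∫_Ω ξ(q) q` for every rearrangement `ρ` of `ρ₀`, and `ξ ∘ q` is the unique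
maximizer up to a.e. equality. -/
theorem stmt3 {N : ℕ}
    (Ω : Set (EuclideanSpace ℝ (Fin N)))
    (hΩ_meas : MeasurableSet Ω) (hΩ_bd : Bornology.IsBounded Ω)
    (p s : ℝ) (hp : 1 < p) (hs : s = p / (p - 1))
    (ρ₀ : EuclideanSpace ℝ (Fin N) → ℝ) (hρ₀_meas : Measurable ρ₀)
    (hρ₀_Lp : MemLp ρ₀ (ENNReal.ofReal p) (volume.restrict Ω))
    (hρ₀_ne : ¬ ρ₀ =ᵐ[volume.restrict Ω] 0)
    (q : EuclideanSpace ℝ (Fin N) → ℝ) (hq_meas : Measurable q)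
    (hq_Ls : MemLp q (ENNReal.ofReal s) (volume.restrict Ω))
    (hq_ne : ¬ q =ᵐ[volume.restrict Ω] 0)
    (ξ : ℝ → ℝ) (hξ_mono : Monotone ξ)
    (hξq_rearr : ∀ t : ℝ,
      volume {x ∈ Ω | t ≤ ξ (q x)} = volume {x ∈ Ω | t ≤ ρ₀ x}) :
    (∀ ρ : EuclideanSpace ℝ (Fin N) → ℝ, Measurable ρ →
      (∀ t : ℝ, volume {x ∈ Ω | t ≤ ρ x} = volume {x ∈ Ω | t ≤ ρ₀ x}) →
      ∫ x in Ω, ρ x * q x ≤ ∫ x in Ω, ξ (q x) * q x) ∧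
    (∀ ρ : EuclideanSpace ℝ (Fin N) → ℝ, Measurable ρ →
      (∀ t : ℝ, volume {x ∈ Ω | t ≤ ρ x} = volume {x ∈ Ω | t ≤ ρ₀ x}) →
      (∫ x in Ω, ρ x * q x) = ∫ x in Ω, ξ (q x) * q x →
      ρ =ᵐ[volume.restrict Ω] fun x => ξ (q x)) :=
  stmt3_general Ω hΩ_bd p s hp hs ρ₀ hρ₀_Lp q hq_meas hq_Ls ξ hξ_mono hξq_rearr
end

section
/- Let r > 1, s = r/(r−1), let ρ₀ ∈ L^r(Ω) with ρ₀ ≢ 0, let P be the set of all rearrangements of ρ₀, and let q ∈ L^s(Ω) with q ≢ 0. If there is a decreasing function η : ℝ → ℝ such that η∘q ∈ P, then for every ρ ∈ P one has ∫_Ω ρ q dx ≥ ∫_Ω η(q) q dx, and η∘q is the unique minimizer of ρ ↦ ∫_Ω ρ q dx over P (unique up to equality almost everywhere). -/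
/-!
Write `f = η ∘ q`. By the layer-cake formula (Fubini on `Ω × ℝ`),
`∫ ρ q - ∫ f q = ∫ₜ (∫_{f < t ≤ ρ} q - ∫_{ρ < t ≤ f} q) dt`.
Since `ρ` and `f` are equimeasurable, the two bands `{f < t ≤ ρ}` and `{ρ < t ≤ f}` have equal
measure for every `t`, and since `η` is antitone, `q` is strictly larger on the first band than on
the second. Hence every integrand is nonnegative, and positive unless the bands are null.
Equality of the integrals therefore makes almost every band null, which by Fubini again means
`ρ = f` a.e.
Integrability is Hölder's inequality, `ρ ∈ Lᵖ` being inherited from `ρ₀`.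
-/

open MeasureTheory Set

section LayerCake

variable {α : Type*} [MeasurableSpace α] {μ : Measure α}

def levelBand (g h : α → ℝ) (t : ℝ) : Set α := {x | g x < t ∧ t ≤ h x}

lemma measurableSet_levelBand {g h : α → ℝ} (hg : Measurable g) (hh : Measurable h) (t : ℝ) :
    MeasurableSet (levelBand g h t) :=
  (measurableSet_lt hg measurable_const).inter (measurableSet_le measurable_const hh)

lemma measurableSet_levelBand_prod {g h : α → ℝ} (hg : Measurable g) (hh : Measurable h) :
    MeasurableSet {z : α × ℝ | z.1 ∈ levelBand g h z.2} :=
  (measurableSet_lt (hg.comp measurable_fst) measurable_snd).inter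
    (measurableSet_le measurable_snd (hh.comp measurable_fst))

lemma integral_indicator_Ioc_const (a b c : ℝ) :
    ∫ t, (Ioc a b).indicator (fun _ => c) t = max (b - a) 0 * c := by
  rw [integral_indicator_const _ measurableSet_Ioc, Real.volume_real_Ioc, smul_eq_mul]

variable {g h q : α → ℝ}

lemma integrable_sub_mul (hgq : Integrable (fun x => g x * q x) μ)
    (hhq : Integrable (fun x => h x * q x) μ) : Integrable (fun x => (h x - g x) * q x) μ :=
  (hhq.sub hgq).congr (ae_of_all _ fun x => by simp only [Pi.sub_apply, sub_mul])

variable (hg : Measurable g) (hh : Measurable h) (hq : Measurable q)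
  (hgq : Integrable (fun x => g x * q x) μ) (hhq : Integrable (fun x => h x * q x) μ)
include hg hh hq hgq hhq

lemma integrable_levelBand_indicator_prod :
    Integrable (Function.uncurry fun x t => (Ioc (g x) (h x)).indicator (fun _ => q x) t)
      (μ.prod volume) := by
  have hmeas :
      Measurable (Function.uncurry fun x t => (Ioc (g x) (h x)).indicator (fun _ => q x) t) :=
    (hq.comp measurable_fst).indicator (measurableSet_levelBand_prod hg hh)
  rw [integrable_prod_iff hmeas.aestronglyMeasurable]
  refine ⟨ae_of_all _ fun x => ?_, ?_⟩
  · exact (integrable_indicator_iff (measurableSet_Ioc (a := g x) (b := h x))).2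
      (integrableOn_const (C := q x) (measure_Ioc_lt_top (μ := (volume : Measure ℝ))).ne)
  · have hnorm : ∀ x, ∫ t, ‖(Ioc (g x) (h x)).indicator (fun _ => q x) t‖
        = max (h x - g x) 0 * |q x| := fun x => by
      simp only [norm_indicator_eq_indicator_norm, Real.norm_eq_abs, integral_indicator_Ioc_const]
    simp only [Function.uncurry_apply_pair, hnorm]
    refine (integrable_sub_mul hgq hhq).mono (by fun_prop) (ae_of_all _ fun x => ?_)
    simp only [norm_mul, Real.norm_eq_abs, abs_abs, abs_of_nonneg (le_max_right (h x - g x) 0)]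
    gcongr
    exact max_le (le_abs_self _) (abs_nonneg _)

variable [SFinite μ]

lemma integrable_setIntegral_levelBand :
    Integrable (fun t => ∫ x in levelBand g h t, q x ∂μ) := by
  refine (integrable_levelBand_indicator_prod hg hh hq hgq hhq).integral_prod_right.congr
    (ae_of_all _ fun t => ?_)
  exact integral_indicator (measurableSet_levelBand hg hh t)

lemma integral_posPart_mul_eq_integral_setIntegral_levelBand :
    ∫ x, max (h x - g x) 0 * q x ∂μ = ∫ t, ∫ x in levelBand g h t, q x ∂μ := by
  have hswap := integral_integral_swap (integrable_levelBand_indicator_prod hg hh hq hgq hhq)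
  simp only [integral_indicator_Ioc_const] at hswap
  rw [hswap]
  exact integral_congr_ae
    (ae_of_all _ fun t => integral_indicator (measurableSet_levelBand hg hh t))

lemma integral_mul_sub_integral_mul_eq_integral_levelBand :
    ∫ x, h x * q x ∂μ - ∫ x, g x * q x ∂μ
      = ∫ t, ((∫ x in levelBand g h t, q x ∂μ) - ∫ x in levelBand h g t, q x ∂μ) := by
  have hpos : ∀ {g h : α → ℝ}, Measurable g → Measurable h →
      Integrable (fun x => g x * q x) μ → Integrable (fun x => h x * q x) μ →
      Integrable (fun x => max (h x - g x) 0 * q x) μ := fun hg hh hgq hhq => by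
    simpa only [Function.uncurry_apply_pair, integral_indicator_Ioc_const] using
      (integrable_levelBand_indicator_prod hg hh hq hgq hhq).integral_prod_left
  calc ∫ x, h x * q x ∂μ - ∫ x, g x * q x ∂μ
      = ∫ x, (max (h x - g x) 0 * q x - max (g x - h x) 0 * q x) ∂μ := by
        rw [← integral_sub hhq hgq]
        congr with x
        rw [← sub_mul, ← sub_mul, ← neg_sub (h x) (g x), max_zero_sub_max_neg_zero_eq_self]
    _ = (∫ x, max (h x - g x) 0 * q x ∂μ) - ∫ x, max (g x - h x) 0 * q x ∂μ :=
        integral_sub (hpos hg hh hgq hhq) (hpos hh hg hhq hgq)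
    _ = _ := by
      rw [integral_posPart_mul_eq_integral_setIntegral_levelBand hg hh hq hgq hhq,
        integral_posPart_mul_eq_integral_setIntegral_levelBand hh hg hq hhq hgq,
        integral_sub (integrable_setIntegral_levelBand hg hh hq hgq hhq)
          (integrable_setIntegral_levelBand hh hg hq hhq hgq)]

end LayerCake

section Rearrangement

variable {α : Type*} [MeasurableSpace α] {μ : Measure α} {g h q : α → ℝ}

lemma measure_levelBand_comm [IsFiniteMeasure μ] (hg : Measurable g) (hh : Measurable h)
    (hdist : ∀ t, μ {x | t ≤ g x} = μ {x | t ≤ h x}) (t : ℝ) :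
    μ (levelBand g h t) = μ (levelBand h g t) := by
  have hdiff : ∀ {g h : α → ℝ}, levelBand g h t = {x | t ≤ h x} \ {x | t ≤ g x} := by
    intro g h; ext x; simp [levelBand, and_comm]
  have key : μ (levelBand g h t) + μ ({x | t ≤ h x} ∩ {x | t ≤ g x})
      = μ (levelBand h g t) + μ ({x | t ≤ g x} ∩ {x | t ≤ h x}) := by
    rw [hdiff, hdiff, measure_sdiff_add_inter _ (measurableSet_le measurable_const hg),
      measure_sdiff_add_inter _ (measurableSet_le measurable_const hh), hdist]
  rw [inter_comm] at key
  exact (ENNReal.add_left_inj (measure_ne_top μ _)).1 key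

lemma ae_le_of_ae_measure_levelBand_eq_zero [SFinite μ] (hg : Measurable g) (hh : Measurable h)
    (h0 : ∀ᵐ t, μ (levelBand g h t) = 0) : h ≤ᵐ[μ] g := by
  have hnot : ∀ᵐ x ∂μ, ∀ᵐ t, t ∉ Ioc (g x) (h x) :=
    (Measure.ae_ae_comm (measurableSet_levelBand_prod hg hh).compl).2
      (h0.mono fun t ht => measure_eq_zero_iff_ae_notMem.1 ht)
  filter_upwards [hnot] with x hx
  have := measure_eq_zero_iff_ae_notMem.2 hx
  rw [Real.volume_Ioc, ENNReal.ofReal_eq_zero, sub_nonpos] at this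
  exact this

lemma setIntegral_lt_setIntegral_of_forall_lt {s : Set α} {f f' : α → ℝ} (hs : MeasurableSet s)
    (hμs : μ s ≠ 0) (hf : IntegrableOn f s μ) (hf' : IntegrableOn f' s μ)
    (hlt : ∀ x ∈ s, f x < f' x) : ∫ x in s, f x ∂μ < ∫ x in s, f' x ∂μ := by
  rw [← sub_pos, ← integral_sub hf' hf, setIntegral_pos_iff_support_of_nonneg_ae
    ((ae_restrict_iff' hs).2 (ae_of_all _ fun x hx => (sub_pos.2 (hlt x hx)).le)) (hf'.sub hf)]
  rwa [inter_eq_self_of_subset_right fun x hx =>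
    Function.mem_support.2 (sub_pos.2 (hlt x hx)).ne', pos_iff_ne_zero]

lemma setIntegral_lt_setIntegral_of_separated [IsFiniteMeasure μ] {A B : Set α}
    (hA : MeasurableSet A) (hB : MeasurableSet B) (hAB : μ A = μ B) (hA0 : μ A ≠ 0)
    (hq : Integrable q μ) (hsep : ∀ x ∈ A, ∀ y ∈ B, q y < q x) :
    ∫ y in B, q y ∂μ < ∫ x in A, q x ∂μ := by
  obtain ⟨x₀, hx₀⟩ := nonempty_of_measure_ne_zero hA0
  obtain ⟨y₀, hy₀⟩ := nonempty_of_measure_ne_zero (hAB ▸ hA0)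
  -- `c` separates the values of `q` on `B` from those on `A`.
  set c := sSup (q '' B)
  have hcB : ∀ y ∈ B, q y ≤ c := fun y hy =>
    le_csSup ⟨q x₀, forall_mem_image.2 fun y hy => (hsep x₀ hx₀ y hy).le⟩ (mem_image_of_mem q hy)
  have hcA : ∀ x ∈ A, c ≤ q x := fun x hx =>
    csSup_le ⟨q y₀, mem_image_of_mem q hy₀⟩ (forall_mem_image.2 fun y hy => (hsep x hx y hy).le)
  have hc : ∀ {s : Set α}, IntegrableOn (fun _ => c) s μ := integrableOn_const (measure_ne_top μ _)
  have hcA_int : ∫ _ in B, c ∂μ = ∫ _ in A, c ∂μ := by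
    simp only [setIntegral_const, measureReal_def, hAB]
  by_cases hattain : ∃ x ∈ A, q x = c
  · obtain ⟨x, hx, hqx⟩ := hattain
    calc ∫ y in B, q y ∂μ < ∫ _ in B, c ∂μ :=
          setIntegral_lt_setIntegral_of_forall_lt hB (hAB ▸ hA0) hq.integrableOn hc
            fun y hy => hqx ▸ hsep x hx y hy
      _ = ∫ _ in A, c ∂μ := hcA_int
      _ ≤ ∫ x in A, q x ∂μ := setIntegral_mono_on hc hq.integrableOn hA hcA
  · push Not at hattain
    calc ∫ y in B, q y ∂μ ≤ ∫ _ in B, c ∂μ := setIntegral_mono_on hq.integrableOn hc hB hcB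
      _ = ∫ _ in A, c ∂μ := hcA_int
      _ < ∫ x in A, q x ∂μ := setIntegral_lt_setIntegral_of_forall_lt hA hA0 hc hq.integrableOn
          fun x hx => (hcA x hx).lt_of_ne (hattain x hx).symm

end Rearrangement

section AntitoneMinimizer

variable {α : Type*} {ρ q : α → ℝ} {η : ℝ → ℝ}

lemma lt_of_mem_levelBand_comp_antitone (hη : Antitone η) {t : ℝ} {x y : α}
    (hx : x ∈ levelBand (fun x => η (q x)) ρ t) (hy : y ∈ levelBand ρ (fun x => η (q x)) t) :
    q y < q x :=
  hη.reflect_lt (hx.1.trans_le hy.2)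

variable [MeasurableSpace α] {μ : Measure α} [IsFiniteMeasure μ]
  (hρ : Measurable ρ) (hq : Measurable q) (hη : Antitone η)
  (hdist : ∀ t, μ {x | t ≤ ρ x} = μ {x | t ≤ η (q x)}) (hq_int : Integrable q μ)
include hρ hq hη hdist hq_int

lemma setIntegral_levelBand_lt_of_measure_ne_zero {t : ℝ}
    (hne : μ (levelBand (fun x => η (q x)) ρ t) ≠ 0) :
    ∫ x in levelBand ρ (fun x => η (q x)) t, q x ∂μ
      < ∫ x in levelBand (fun x => η (q x)) ρ t, q x ∂μ :=
  have hf := hη.measurable.comp hq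
  setIntegral_lt_setIntegral_of_separated (measurableSet_levelBand hf hρ t)
    (measurableSet_levelBand hρ hf t) (measure_levelBand_comm hf hρ (fun t => (hdist t).symm) t)
    hne hq_int fun _ hx _ hy => lt_of_mem_levelBand_comp_antitone hη hx hy

lemma setIntegral_levelBand_le (t : ℝ) :
    ∫ x in levelBand ρ (fun x => η (q x)) t, q x ∂μ
      ≤ ∫ x in levelBand (fun x => η (q x)) ρ t, q x ∂μ := by
  by_cases hne : μ (levelBand (fun x => η (q x)) ρ t) = 0
  · have hne' := measure_levelBand_comm (hη.measurable.comp hq) hρ (fun t => (hdist t).symm) t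
    rw [setIntegral_measure_zero _ hne, setIntegral_measure_zero _ (hne' ▸ hne)]
  · exact (setIntegral_levelBand_lt_of_measure_ne_zero hρ hq hη hdist hq_int hne).le

variable (hρq : Integrable (fun x => ρ x * q x) μ) (hηq : Integrable (fun x => η (q x) * q x) μ)
include hρq hηq

theorem integral_comp_antitone_mul_le :
    ∫ x, η (q x) * q x ∂μ ≤ ∫ x, ρ x * q x ∂μ := by
  rw [← sub_nonneg, integral_mul_sub_integral_mul_eq_integral_levelBand
    (g := fun x => η (q x)) (hη.measurable.comp hq) hρ hq hηq hρq]
  exact integral_nonneg fun t => sub_nonneg.2 (setIntegral_levelBand_le hρ hq hη hdist hq_int t)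

theorem ae_eq_comp_antitone_of_integral_mul_eq
    (heq : ∫ x, ρ x * q x ∂μ = ∫ x, η (q x) * q x ∂μ) : ρ =ᵐ[μ] fun x => η (q x) := by
  have hf : Measurable fun x => η (q x) := hη.measurable.comp hq
  have hzero := integral_mul_sub_integral_mul_eq_integral_levelBand hf hρ hq hηq hρq
  rw [heq, sub_self, eq_comm] at hzero
  have hgap := (integral_eq_zero_iff_of_nonneg
    (fun t => sub_nonneg.2 (setIntegral_levelBand_le hρ hq hη hdist hq_int t))
    ((integrable_setIntegral_levelBand hf hρ hq hηq hρq).sub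
      (integrable_setIntegral_levelBand hρ hf hq hρq hηq))).1 hzero
  have hnull : ∀ᵐ t, μ (levelBand (fun x => η (q x)) ρ t) = 0 := hgap.mono fun t ht => by
    by_contra hne
    exact (sub_pos.2 (setIntegral_levelBand_lt_of_measure_ne_zero hρ hq hη hdist hq_int hne)).ne' ht
  have hnull' : ∀ᵐ t, μ (levelBand ρ (fun x => η (q x)) t) = 0 := hnull.mono fun t ht =>
    measure_levelBand_comm hf hρ (fun t => (hdist t).symm) t ▸ ht
  exact (ae_le_of_ae_measure_levelBand_eq_zero hf hρ hnull).antisymm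
    (ae_le_of_ae_measure_levelBand_eq_zero hρ hf hnull')

end AntitoneMinimizer

lemma MeasureTheory.Measure.restrict_setOf_le {α : Type*} [MeasurableSpace α] (μ : Measure α)
    {Ω : Set α} (hΩ : MeasurableSet Ω) (g : α → ℝ) (t : ℝ) :
    μ.restrict Ω {x | t ≤ g x} = μ {x ∈ Ω | t ≤ g x} := by
  rw [Measure.restrict_apply' hΩ, inter_comm]
  rfl

lemma identDistrib_of_measure_setOf_le_eq {α : Type*} [MeasurableSpace α] {μ : Measure α}
    [IsFiniteMeasure μ] {g h : α → ℝ} (hg : Measurable g) (hh : Measurable h)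
    (hdist : ∀ t, μ {x | t ≤ g x} = μ {x | t ≤ h x}) : ProbabilityTheory.IdentDistrib g h μ μ where
  aemeasurable_fst := hg.aemeasurable
  aemeasurable_snd := hh.aemeasurable
  map_eq := Measure.ext_of_Ici _ _ fun t => by
    rw [Measure.map_apply hg measurableSet_Ici, Measure.map_apply hh measurableSet_Ici]
    exact hdist t

theorem stmt4_general {N : ℕ}
    (Ω : Set (EuclideanSpace ℝ (Fin N)))
    (hΩ_meas : MeasurableSet Ω) (hΩ_bd : Bornology.IsBounded Ω)
    (p s : ℝ) (hp : 1 < p) (hs : s = p / (p - 1))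
    (ρ₀ : EuclideanSpace ℝ (Fin N) → ℝ) (hρ₀_meas : Measurable ρ₀)
    (hρ₀_Lp : MemLp ρ₀ (ENNReal.ofReal p) (volume.restrict Ω))
    (q : EuclideanSpace ℝ (Fin N) → ℝ) (hq_meas : Measurable q)
    (hq_Ls : MemLp q (ENNReal.ofReal s) (volume.restrict Ω))
    (η : ℝ → ℝ) (hη_anti : Antitone η)
    (hηq_rearr : ∀ t : ℝ,
      volume {x ∈ Ω | t ≤ η (q x)} = volume {x ∈ Ω | t ≤ ρ₀ x}) :
    (∀ ρ : EuclideanSpace ℝ (Fin N) → ℝ, Measurable ρ →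
      (∀ t : ℝ, volume {x ∈ Ω | t ≤ ρ x} = volume {x ∈ Ω | t ≤ ρ₀ x}) →
      ∫ x in Ω, η (q x) * q x ≤ ∫ x in Ω, ρ x * q x) ∧
    (∀ ρ : EuclideanSpace ℝ (Fin N) → ℝ, Measurable ρ →
      (∀ t : ℝ, volume {x ∈ Ω | t ≤ ρ x} = volume {x ∈ Ω | t ≤ ρ₀ x}) →
      (∫ x in Ω, ρ x * q x) = ∫ x in Ω, η (q x) * q x →
      ρ =ᵐ[volume.restrict Ω] fun x => η (q x)) := by
  have : IsFiniteMeasure (volume.restrict Ω) := isFiniteMeasure_restrict.2 hΩ_bd.measure_lt_top.ne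
  have hconj : p.HolderConjugate s := (Real.holderConjugate_iff_eq_conjExponent hp).2 hs
  have : (ENNReal.ofReal p).HolderConjugate (ENNReal.ofReal s) := hconj.ennrealOfReal
  have hq_int : Integrable q (volume.restrict Ω) :=
    hq_Ls.integrable (ENNReal.one_le_ofReal.2 hconj.symm.lt.le)
  have hdist : ∀ g : EuclideanSpace ℝ (Fin N) → ℝ,
      (∀ t, volume {x ∈ Ω | t ≤ g x} = volume {x ∈ Ω | t ≤ ρ₀ x}) →
      ∀ t, volume.restrict Ω {x | t ≤ g x} = volume.restrict Ω {x | t ≤ ρ₀ x} := fun g hg t => by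
    simp only [Measure.restrict_setOf_le _ hΩ_meas, hg]
  have hmul : ∀ g : EuclideanSpace ℝ (Fin N) → ℝ, Measurable g →
      (∀ t, volume {x ∈ Ω | t ≤ g x} = volume {x ∈ Ω | t ≤ ρ₀ x}) →
      Integrable (fun x => g x * q x) (volume.restrict Ω) := fun g hg hgr =>
    ((identDistrib_of_measure_setOf_le_eq hg hρ₀_meas (hdist g hgr)).memLp_iff.2
      hρ₀_Lp).integrable_mul hq_Ls
  have hηq_meas : Measurable fun x => η (q x) := hη_anti.measurable.comp hq_meas
  have hρ_dist : ∀ ρ : EuclideanSpace ℝ (Fin N) → ℝ,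
      (∀ t, volume {x ∈ Ω | t ≤ ρ x} = volume {x ∈ Ω | t ≤ ρ₀ x}) →
      ∀ t, volume.restrict Ω {x | t ≤ ρ x} = volume.restrict Ω {x | t ≤ η (q x)} :=
    fun ρ hρr t => (hdist ρ hρr t).trans (hdist _ hηq_rearr t).symm
  refine ⟨fun ρ hρ hρr => ?_, fun ρ hρ hρr heq => ?_⟩
  · exact integral_comp_antitone_mul_le hρ hq_meas hη_anti (hρ_dist ρ hρr) hq_int
      (hmul ρ hρ hρr) (hmul _ hηq_meas hηq_rearr)
  · exact ae_eq_comp_antitone_of_integral_mul_eq hρ hq_meas hη_anti (hρ_dist ρ hρr) hq_int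
      (hmul ρ hρ hρr) (hmul _ hηq_meas hηq_rearr) heq

/-- Burton's rearrangement lemma, minimization. Let `p > 1`,
`s = p/(p-1)`, `ρ₀ ∈ L^p(Ω)` nontrivial, `q ∈ L^s(Ω)` nontrivial, and suppose there is an
decreasing function `η : ℝ → ℝ` with `η ∘ q` a rearrangement of `ρ₀`. Then
`∫_Ω ρ q ≥ ∫_Ω η(q) q` for every rearrangement `ρ` of `ρ₀`, and `η ∘ q` is the unique
minimizer up to a.e. equality. -/
theorem stmt4 {N : ℕ}
    (Ω : Set (EuclideanSpace ℝ (Fin N)))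
    (hΩ_meas : MeasurableSet Ω) (hΩ_bd : Bornology.IsBounded Ω)
    (p s : ℝ) (hp : 1 < p) (hs : s = p / (p - 1))
    (ρ₀ : EuclideanSpace ℝ (Fin N) → ℝ) (hρ₀_meas : Measurable ρ₀)
    (hρ₀_Lp : MemLp ρ₀ (ENNReal.ofReal p) (volume.restrict Ω))
    (hρ₀_ne : ¬ ρ₀ =ᵐ[volume.restrict Ω] 0)
    (q : EuclideanSpace ℝ (Fin N) → ℝ) (hq_meas : Measurable q)
    (hq_Ls : MemLp q (ENNReal.ofReal s) (volume.restrict Ω))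
    (hq_ne : ¬ q =ᵐ[volume.restrict Ω] 0)
    (η : ℝ → ℝ) (hη_anti : Antitone η)
    (hηq_rearr : ∀ t : ℝ,
      volume {x ∈ Ω | t ≤ η (q x)} = volume {x ∈ Ω | t ≤ ρ₀ x}) :
    (∀ ρ : EuclideanSpace ℝ (Fin N) → ℝ, Measurable ρ →
      (∀ t : ℝ, volume {x ∈ Ω | t ≤ ρ x} = volume {x ∈ Ω | t ≤ ρ₀ x}) →
      ∫ x in Ω, η (q x) * q x ≤ ∫ x in Ω, ρ x * q x) ∧
    (∀ ρ : EuclideanSpace ℝ (Fin N) → ℝ, Measurable ρ →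
      (∀ t : ℝ, volume {x ∈ Ω | t ≤ ρ x} = volume {x ∈ Ω | t ≤ ρ₀ x}) →
      (∫ x in Ω, ρ x * q x) = ∫ x in Ω, η (q x) * q x →
      ρ =ᵐ[volume.restrict Ω] fun x => η (q x)) :=
  stmt4_general Ω hΩ_meas hΩ_bd p s hp hs ρ₀ hρ₀_meas hρ₀_Lp q hq_meas hq_Ls η hη_anti hηq_rearr
end

section
/- Let f ∈ L¹(Ω) be nonnegative with all level sets {x ∈ Ω : f(x) = c} of Lebesgue measure zero. Define t₁ = sup{s ∈ ℝ : |{x ∈ Ω : f(x) ≥ s}| ≥ S₁} and D̂₁ = {x ∈ Ω : f(x) ≥ t₁}, and recursively for i = 2, …, m−1 set t_i = sup{s ∈ ℝ : |{x ∈ Ω \ (D̂₁ ∪ ⋯ ∪ D̂_{i−1}) : f(x) ≥ s}| ≥ S_i} and D̂_i = {x ∈ Ω \ (D̂₁ ∪ ⋯ ∪ D̂_{i−1}) : f(x) ≥ t_i}, with D̂_m = Ω \ (D̂₁ ∪ ⋯ ∪ D̂_{m−1}). Then |D̂_i| = S_i for each i = 1, …, m, the function ρ̂ = c₁χ_{D̂₁}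 + ⋯ + c_m χ_{D̂_m} belongs to P, and ∫_Ω ρ̂ f dx ≤ ∫_Ω ρ f dx for every ρ ∈ P; that is, ρ̂ solves inf_{ρ ∈ P} ∫_Ω ρ f dx. -/
/-!
Each `D̂ᵢ` with `i < m` is a superlevel set of `f` on what `D̂₁, …, D̂ᵢ₋₁` leave of `Ω`.
Since the level sets of `f` are null, the distribution function `s ↦ |{f ≥ s}|` on that remainder
is continuous, so at the supremum `tᵢ` it takes exactly the value `Sᵢ`; by induction `|D̂ᵢ| = Sᵢ`,
and `ρ̂` has the distribution of `ρ₀`. Moreover `f` decreases along the `D̂ᵢ` while `cᵢ` increases,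
so `ρ̂` and `f` are oppositely ordered on `Ω`. By the layer cake formula for the measure `f dx`,
`∫ ρ f = ∫₀^∞ ∫_{ρ ≥ s} f ds` for `ρ ≥ 0`. If `ρ` has the distribution of `ρ̂`, then for
each `s` the sets `{ρ ≥ s}` and `{ρ̂ ≥ s}` have the same measure, and the latter carries the smaller
values of `f` (bathtub principle), so the inner integrals compare pointwise.
-/

open MeasureTheory Set
open scoped ENNReal

section Levels

variable {α : Type*} {A : Set α} {g : α → ℝ} {t : ℝ}

theorem sep_lt_eq_iUnion_sep_add_le :
    {x ∈ A | t < g x} = ⋃ n : ℕ, {x ∈ A | t + 1 / (n + 1) ≤ g x} := by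
  ext x
  simp only [mem_iUnion]
  constructor
  · rintro ⟨hx, htx⟩
    obtain ⟨n, hn⟩ := exists_nat_one_div_lt (sub_pos.2 htx)
    exact ⟨n, hx, by linarith⟩
  · rintro ⟨n, hx, htx⟩
    exact ⟨hx, (lt_add_of_pos_right t Nat.one_div_pos_of_nat).trans_le htx⟩

theorem sep_le_eq_iInter_sep_sub_le :
    {x ∈ A | t ≤ g x} = ⋂ n : ℕ, {x ∈ A | t - 1 / (n + 1) ≤ g x} := by
  ext x
  simp only [mem_iInter]
  constructor
  · rintro ⟨hx, htx⟩ n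
    exact ⟨hx, (sub_le_self t Nat.one_div_pos_of_nat.le).trans htx⟩
  · intro hx
    refine ⟨(hx 0).1, le_of_forall_pos_le_add fun ε hε => ?_⟩
    obtain ⟨n, hn⟩ := exists_nat_one_div_lt hε
    linarith [(hx n).2]

end Levels

section Threshold

variable {α : Type*} [MeasurableSpace α] {μ : Measure α} {A : Set α} {g : α → ℝ}

theorem le_measure_sep_le_of_forall_lt (hA : MeasurableSet A) (hA_fin : μ A ≠ ∞)
    (hg : Measurable g) {a : ℝ≥0∞} {t : ℝ} (h : ∀ s < t, a ≤ μ {x ∈ A | s ≤ g x}) :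
    a ≤ μ {x ∈ A | t ≤ g x} := by
  have hanti : Antitone fun n : ℕ => {x ∈ A | t - 1 / (n + 1) ≤ g x} :=
    fun n k hnk x hx => ⟨hx.1, le_trans (by gcongr) hx.2⟩
  rw [sep_le_eq_iInter_sep_sub_le, hanti.measure_iInter
    (fun n => (hA.inter (measurableSet_le measurable_const hg)).nullMeasurableSet)
    ⟨0, ne_top_of_le_ne_top hA_fin (measure_mono (sep_subset _ _))⟩]
  exact le_iInf fun n => h _ (sub_lt_self t Nat.one_div_pos_of_nat)

theorem measure_sep_lt_le_of_forall_gt {a : ℝ≥0∞} {t : ℝ}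
    (h : ∀ s > t, μ {x ∈ A | s ≤ g x} ≤ a) : μ {x ∈ A | t < g x} ≤ a := by
  have hmono : Monotone fun n : ℕ => {x ∈ A | t + 1 / (n + 1) ≤ g x} :=
    fun n k hnk x hx => ⟨hx.1, le_trans (by gcongr) hx.2⟩
  rw [sep_lt_eq_iUnion_sep_add_le, hmono.measure_iUnion]
  exact iSup_le fun n => h _ (lt_add_of_pos_right t Nat.one_div_pos_of_nat)

theorem measure_sep_sSup_le_eq (hA : MeasurableSet A) (hA_fin : μ A ≠ ∞) (hg : Measurable g)
    (hg_level : ∀ c : ℝ, μ {x ∈ A | g x = c} = 0) (hg_nonneg : ∀ x ∈ A, 0 ≤ g x)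
    {a : ℝ≥0∞} (ha : 0 < a) (haA : a ≤ μ A) :
    μ {x ∈ A | sSup {s : ℝ | a ≤ μ {x ∈ A | s ≤ g x}} ≤ g x} = a := by
  set T := {s : ℝ | a ≤ μ {x ∈ A | s ≤ g x}}
  have hsets : Antitone fun s : ℝ => {x ∈ A | s ≤ g x} :=
    fun s s' h x hx => ⟨hx.1, h.trans hx.2⟩
  have hanti : Antitone fun s : ℝ => μ {x ∈ A | s ≤ g x} := fun s s' h => measure_mono (hsets h)
  have hT_ne : T.Nonempty :=
    ⟨0, show a ≤ μ {x ∈ A | 0 ≤ g x} by rwa [sep_eq_self_iff_mem_true.2 hg_nonneg]⟩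
  have hT_bdd : BddAbove T := by
    obtain ⟨n, hn⟩ : ∃ n : ℕ, μ {x ∈ A | (n : ℝ) ≤ g x} < a := by
      have hempty : ⋂ n : ℕ, {x ∈ A | (n : ℝ) ≤ g x} = ∅ :=
        eq_empty_iff_forall_notMem.2 fun x hx => by
          obtain ⟨n, hn⟩ := exists_nat_gt (g x)
          exact (mem_iInter.1 hx n).2.not_gt hn
      have hinf := (hsets.comp_monotone Nat.mono_cast).measure_iInter
        (fun n => (hA.inter (measurableSet_le measurable_const hg)).nullMeasurableSet)
        ⟨0, ne_top_of_le_ne_top hA_fin (measure_mono (sep_subset _ _))⟩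
      simp only [Function.comp_def, hempty, measure_empty] at hinf
      exact iInf_lt_iff.1 (hinf ▸ ha)
    exact ⟨n, fun s hs => not_lt.1 fun hns => (hs.trans (hanti hns.le)).not_gt hn⟩
  refine le_antisymm ?_ (le_measure_sep_le_of_forall_lt hA hA_fin hg fun s hs => ?_)
  · calc μ {x ∈ A | sSup T ≤ g x}
        ≤ μ ({x ∈ A | sSup T < g x} ∪ {x ∈ A | g x = sSup T}) :=
          measure_mono fun x ⟨hx, h⟩ => h.lt_or_eq.imp (⟨hx, ·⟩) (⟨hx, ·.symm⟩)
      _ ≤ μ {x ∈ A | sSup T < g x} + μ {x ∈ A | g x = sSup T} := measure_union_le _ _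
      _ = μ {x ∈ A | sSup T < g x} := by rw [hg_level, add_zero]
      _ ≤ a := measure_sep_lt_le_of_forall_gt fun s hs =>
          (not_le.1 fun h => (le_csSup hT_bdd h).not_gt hs).le
  · obtain ⟨s', hs'T, hss'⟩ := exists_lt_of_lt_csSup hT_ne hs
    exact hs'T.trans (hanti hss'.le)

end Threshold

section StepFunction

variable {α ι : Type*} [Fintype ι] {Ω : Set α} {A : ι → Set α} {c : ι → ℝ}

theorem sum_indicator_eq_of_mem (hA_disj : Pairwise (Function.onFun Disjoint A)) {i : ι} {x : α}
    (hx : x ∈ A i) : ∑ j, (A j).indicator (fun _ => c j) x = c i := by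
  rw [Finset.sum_eq_single i (fun j _ hji => indicator_of_notMem
    (disjoint_left.1 (hA_disj hji.symm) hx) _) (absurd (Finset.mem_univ i)),
    indicator_of_mem hx]

theorem exists_sum_indicator_eq (hA_disj : Pairwise (Function.onFun Disjoint A))
    (hA_union : ⋃ i, A i = Ω) {x : α} (hx : x ∈ Ω) :
    ∃ i, x ∈ A i ∧ ∑ j, (A j).indicator (fun _ => c j) x = c i := by
  obtain ⟨i, hi⟩ := mem_iUnion.1 (hA_union ▸ hx)
  exact ⟨i, hi, sum_indicator_eq_of_mem hA_disj hi⟩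

theorem measure_sep_le_sum_indicator [MeasurableSpace α] (μ : Measure α)
    (hA_meas : ∀ i, MeasurableSet (A i)) (hA_disj : Pairwise (Function.onFun Disjoint A))
    (hA_union : ⋃ i, A i = Ω) (r : ℝ) :
    μ {x ∈ Ω | r ≤ ∑ i, (A i).indicator (fun _ => c i) x} =
      ∑ i ∈ Finset.univ.filter (fun i => r ≤ c i), μ (A i) := by
  have hsep : {x ∈ Ω | r ≤ ∑ i, (A i).indicator (fun _ => c i) x} =
      ⋃ i ∈ Finset.univ.filter (fun i => r ≤ c i), A i := by
    ext x
    simp only [mem_iUnion, Finset.mem_filter, Finset.mem_univ, true_and, exists_prop]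
    constructor
    · rintro ⟨hx, hr⟩
      obtain ⟨i, hi, hval⟩ := exists_sum_indicator_eq (c := c) hA_disj hA_union hx
      exact ⟨i, hval ▸ hr, hi⟩
    · rintro ⟨i, hr, hi⟩
      exact ⟨hA_union ▸ mem_iUnion_of_mem i hi, (sum_indicator_eq_of_mem hA_disj hi).symm ▸ hr⟩
  rw [hsep, measure_biUnion_finset (fun i _ j _ hij => hA_disj hij) fun i _ => hA_meas i]

theorem sum_indicator_mem_of_forall_mem (hA_disj : Pairwise (Function.onFun Disjoint A))
    (hA_union : ⋃ i, A i = Ω) {s : Set ℝ} (hc : ∀ i, c i ∈ s) {x : α} (hx : x ∈ Ω) :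
    ∑ i, (A i).indicator (fun _ => c i) x ∈ s := by
  obtain ⟨i, -, hi⟩ := exists_sum_indicator_eq (c := c) hA_disj hA_union hx
  exact hi ▸ hc i

theorem antivaryOn_sum_indicator [LinearOrder ι] {β : Type*} [Preorder β] {f : α → β}
    (hA_disj : Pairwise (Function.onFun Disjoint A)) (hA_union : ⋃ i, A i = Ω)
    (hc : Monotone c) (hf : ∀ ⦃i j⦄, i < j → ∀ x ∈ A i, ∀ y ∈ A j, f y ≤ f x) :
    AntivaryOn f (fun x => ∑ i, (A i).indicator (fun _ => c i) x) Ω := by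
  intro x hx y hy hxy
  obtain ⟨i, hi, hxi⟩ := exists_sum_indicator_eq (c := c) hA_disj hA_union hx
  obtain ⟨j, hj, hyj⟩ := exists_sum_indicator_eq (c := c) hA_disj hA_union hy
  simp only [hxi, hyj] at hxy
  exact hf (hc.reflect_lt hxy) x hi y hj

end StepFunction

theorem measure_sdiff_iUnion_lt_eq_sum {α ι : Type*} [MeasurableSpace α] {μ : Measure α}
    [Fintype ι] [LinearOrder ι] {Ω : Set α} {A : ι → Set α} {w : ι → ℝ≥0∞}
    (hA_meas : ∀ i, MeasurableSet (A i)) (hA_disj : Pairwise (Function.onFun Disjoint A))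
    (hA_sub : ∀ i, A i ⊆ Ω) (hΩ : μ Ω = ∑ j, w j) (hΩ_fin : μ Ω ≠ ∞) {i : ι}
    (hw : ∀ j < i, μ (A j) = w j) :
    μ (Ω \ ⋃ j, ⋃ (_ : j < i), A j) = ∑ j ∈ Finset.univ.filter (fun j => i ≤ j), w j := by
  have hU : ⋃ j, ⋃ (_ : j < i), A j = ⋃ j ∈ Finset.univ.filter (· < i), A j := by
    ext; simp
  have hU_meas : MeasurableSet (⋃ j, ⋃ (_ : j < i), A j) :=
    MeasurableSet.iUnion fun j => MeasurableSet.iUnion fun _ => hA_meas j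
  have hU_vol : μ (⋃ j, ⋃ (_ : j < i), A j) = ∑ j ∈ Finset.univ.filter (· < i), w j := by
    rw [hU, measure_biUnion_finset (fun j _ k _ hjk => hA_disj hjk) fun j _ => hA_meas j]
    exact Finset.sum_congr rfl fun j hj => hw j (Finset.mem_filter.1 hj).2
  have hU_fin : μ (⋃ j, ⋃ (_ : j < i), A j) ≠ ∞ :=
    ne_top_of_le_ne_top hΩ_fin (measure_mono (iUnion₂_subset fun j _ => hA_sub j))
  rw [← ENNReal.add_right_inj hU_fin, measure_add_sdiff hU_meas.nullMeasurableSet,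
    union_eq_right.2 (iUnion₂_subset fun j _ => hA_sub j), hΩ, hU_vol]
  simpa only [not_lt] using (Finset.sum_filter_add_sum_filter_not _ (· < i) w).symm

/-- The sets `D̂ᵢ` of the construction: each is the superlevel set `{f ≥ tᵢ}` of what the
previous ones leave of `Ω`, and the last one is all that is left. Indices run over `Fin m`, so
`A 0` is `D̂₁` and `A (m - 1)` is `D̂ₘ`. -/
structure IsGreedyPartition {α : Type*} {m : ℕ} (Ω : Set α) (f : α → ℝ) (t : Fin m → ℝ)
    (A : Fin m → Set α) : Prop where
  eq_sep : ∀ i : Fin m, (i : ℕ) < m - 1 → A i = {x ∈ Ω \ ⋃ j, ⋃ (_ : j < i), A j | t i ≤ f x}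
  eq_last : ∀ i : Fin m, (i : ℕ) = m - 1 → A i = Ω \ ⋃ j, ⋃ (_ : j < i), A j

namespace IsGreedyPartition

variable {α : Type*} {m : ℕ} {Ω : Set α} {f : α → ℝ} {t : Fin m → ℝ} {A : Fin m → Set α}

theorem subset_sdiff (hA : IsGreedyPartition Ω f t A) (i : Fin m) :
    A i ⊆ Ω \ ⋃ j, ⋃ (_ : j < i), A j := by
  rcases lt_or_eq_of_le (Nat.le_sub_one_of_lt i.2) with h | h
  · rw [hA.eq_sep i h]
    exact sep_subset _ _
  · rw [hA.eq_last i h]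

theorem subset (hA : IsGreedyPartition Ω f t A) (i : Fin m) : A i ⊆ Ω :=
  (hA.subset_sdiff i).trans sdiff_subset

theorem pairwise_disjoint (hA : IsGreedyPartition Ω f t A) :
    Pairwise (Function.onFun Disjoint A) :=
  (pairwise_disjoint_on A).2 fun _ j hij => disjoint_left.2 fun _ hxi hxj =>
    (hA.subset_sdiff j hxj).2 (mem_biUnion hij hxi)

theorem iUnion_eq (hA : IsGreedyPartition Ω f t A) (hm : 0 < m) : ⋃ i, A i = Ω := by
  refine (iUnion_subset hA.subset).antisymm fun x hx => ?_
  set last : Fin m := ⟨m - 1, Nat.sub_one_lt_of_lt hm⟩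
  by_cases hprev : x ∈ ⋃ j, ⋃ (_ : j < last), A j
  · exact iUnion₂_subset (fun j _ => subset_iUnion A j) hprev
  · exact mem_iUnion_of_mem last (hA.eq_last last rfl ▸ ⟨hx, hprev⟩)

theorem apply_le_of_lt (hA : IsGreedyPartition Ω f t A) {i j : Fin m} (hij : i < j) {x y : α}
    (hx : x ∈ A i) (hy : y ∈ A j) : f y ≤ f x := by
  have hi : (i : ℕ) < m - 1 := by omega
  have hy' := hA.subset_sdiff j hy
  have hyi : y ∉ A i := fun h => hy'.2 (mem_biUnion hij h)
  have hprev : y ∉ ⋃ k, ⋃ (_ : k < i), A k := fun h => hy'.2 <|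
    iUnion₂_mono' (fun k hk => ⟨k, hk.trans hij, subset_rfl⟩) h
  rw [hA.eq_sep i hi] at hx hyi
  exact (not_le.1 fun hty => hyi ⟨⟨hy'.1, hprev⟩, hty⟩).le.trans hx.2

variable [MeasurableSpace α]

theorem measurableSet (hA : IsGreedyPartition Ω f t A) (hΩ : MeasurableSet Ω)
    (hf : Measurable f) (i : Fin m) : MeasurableSet (A i) := by
  induction i using WellFoundedLT.induction with
  | ind i ih =>
    have hprev : MeasurableSet (⋃ j, ⋃ (_ : j < i), A j) :=
      MeasurableSet.iUnion fun j => MeasurableSet.iUnion fun hj => ih j hj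
    rcases lt_or_eq_of_le (Nat.le_sub_one_of_lt i.2) with h | h
    · rw [hA.eq_sep i h]
      exact (hΩ.diff hprev).inter (measurableSet_le measurable_const hf)
    · rw [hA.eq_last i h]
      exact hΩ.diff hprev

theorem measure_eq (hA : IsGreedyPartition Ω f t A) {μ : Measure α} (hΩ : MeasurableSet Ω)
    (hf : Measurable f) {S : Fin m → ℝ} (hS : ∀ i, 0 < S i)
    (hΩ_vol : μ Ω = ∑ i, ENNReal.ofReal (S i)) (hΩ_fin : μ Ω ≠ ∞)
    (hf_level : ∀ a : ℝ, μ {x ∈ Ω | f x = a} = 0) (hf_nonneg : ∀ x ∈ Ω, 0 ≤ f x)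
    (ht : ∀ i : Fin m, (i : ℕ) < m - 1 →
      t i = sSup {s : ℝ | ENNReal.ofReal (S i) ≤ μ {x ∈ Ω \ ⋃ j, ⋃ (_ : j < i), A j | s ≤ f x}})
    (i : Fin m) : μ (A i) = ENNReal.ofReal (S i) := by
  induction i using WellFoundedLT.induction with
  | ind i ih =>
    have hrest := measure_sdiff_iUnion_lt_eq_sum (hA.measurableSet hΩ hf) hA.pairwise_disjoint
      hA.subset hΩ_vol hΩ_fin ih
    rcases lt_or_eq_of_le (Nat.le_sub_one_of_lt i.2) with h | h
    · rw [hA.eq_sep i h, ht i h]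
      refine measure_sep_sSup_le_eq
        (hΩ.diff (MeasurableSet.iUnion fun j => MeasurableSet.iUnion fun _ =>
          hA.measurableSet hΩ hf j))
        (ne_top_of_le_ne_top hΩ_fin (measure_mono sdiff_subset)) hf
        (fun a => measure_mono_null (inter_subset_inter_left _ sdiff_subset) (hf_level a))
        (fun x hx => hf_nonneg x hx.1) (ENNReal.ofReal_pos.2 (hS i)) ?_
      rw [hrest]
      exact Finset.single_le_sum (f := fun j => ENNReal.ofReal (S j)) (fun j _ => zero_le)
        (Finset.mem_filter.2 ⟨Finset.mem_univ i, le_rfl⟩)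
    · have hlast : Finset.univ.filter (fun j => i ≤ j) = {i} := by
        ext j
        simp only [Finset.mem_filter, Finset.mem_univ, true_and, Finset.mem_singleton,
          Fin.le_def, Fin.ext_iff]
        omega
      rw [hA.eq_last i h, hrest, hlast, Finset.sum_singleton]

end IsGreedyPartition

section Rearrangement

variable {α : Type*} [MeasurableSpace α] {μ : Measure α}

theorem setLIntegral_le_setLIntegral_of_measure_eq {g : α → ℝ≥0∞} {B C : Set α}
    (hB : MeasurableSet B) (hC : MeasurableSet C) (hμ : μ C = μ B) (hfin : μ C ≠ ∞)
    (hg : ∀ x ∈ C, ∀ y ∈ B \ C, g x ≤ g y) :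
    ∫⁻ x in C, g x ∂μ ≤ ∫⁻ x in B, g x ∂μ := by
  set τ := ⨆ x ∈ C \ B, g x
  have hswap : μ (C \ B) = μ (B \ C) := by
    have hCB : μ (C ∩ B) ≠ ∞ := ne_top_of_le_ne_top hfin (measure_mono inter_subset_left)
    rw [← ENNReal.add_right_inj hCB, measure_inter_add_sdiff _ hB, inter_comm,
      measure_inter_add_sdiff _ hC, hμ]
  calc ∫⁻ x in C, g x ∂μ = ∫⁻ x in C ∩ B, g x ∂μ + ∫⁻ x in C \ B, g x ∂μ :=
        (lintegral_inter_add_sdiff _ _ hB).symm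
    _ ≤ ∫⁻ x in C ∩ B, g x ∂μ + ∫⁻ _ in C \ B, τ ∂μ :=
        add_le_add le_rfl (setLIntegral_mono' (hC.diff hB) fun x hx => le_biSup g hx)
    _ = ∫⁻ x in B ∩ C, g x ∂μ + ∫⁻ _ in B \ C, τ ∂μ := by
        rw [setLIntegral_const, setLIntegral_const, hswap, inter_comm]
    _ ≤ ∫⁻ x in B ∩ C, g x ∂μ + ∫⁻ x in B \ C, g x ∂μ := by
        refine add_le_add le_rfl (setLIntegral_mono' (hB.diff hC) fun y hy => ?_)
        exact iSup₂_le fun x hx => hg x hx.1 y hy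
    _ = ∫⁻ x in B, g x ∂μ := lintegral_inter_add_sdiff _ _ hC

theorem setLIntegral_ofReal_mul_eq_lintegral_Ioi {Ω : Set α} {σ : α → ℝ} {g : α → ℝ≥0∞}
    (hσ : Measurable σ) (hg : Measurable g) (hσ_nonneg : 0 ≤ᵐ[μ.restrict Ω] σ) :
    ∫⁻ x in Ω, ENNReal.ofReal (σ x) * g x ∂μ =
      ∫⁻ s in Ioi 0, ∫⁻ x in {x ∈ Ω | s ≤ σ x}, g x ∂μ := by
  have hν := withDensity_absolutelyContinuous (μ.restrict Ω) g
  calc ∫⁻ x in Ω, ENNReal.ofReal (σ x) * g x ∂μ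
      = ∫⁻ x, ENNReal.ofReal (σ x) ∂(μ.restrict Ω).withDensity g := by
        rw [lintegral_withDensity_eq_lintegral_mul _ hg hσ.ennreal_ofReal]
        simp only [Pi.mul_apply, mul_comm]
    _ = ∫⁻ s in Ioi 0, (μ.restrict Ω).withDensity g {x | s ≤ σ x} :=
        lintegral_eq_lintegral_meas_le _ (hν.ae_le hσ_nonneg) hσ.aemeasurable
    _ = ∫⁻ s in Ioi 0, ∫⁻ x in {x ∈ Ω | s ≤ σ x}, g x ∂μ := by
        refine lintegral_congr fun s => ?_
        rw [withDensity_apply _ (measurableSet_le measurable_const hσ),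
          Measure.restrict_restrict (measurableSet_le measurable_const hσ), inter_comm]
        rfl

theorem AntivaryOn.setLIntegral_ofReal_mul_le {Ω : Set α} (hΩ : MeasurableSet Ω)
    (hΩ_fin : μ Ω ≠ ∞) {ρ ρ' : α → ℝ} {g : α → ℝ≥0∞} (hanti : AntivaryOn g ρ Ω)
    (hρ : Measurable ρ) (hρ' : Measurable ρ') (hg : Measurable g)
    (hρ_nonneg : 0 ≤ᵐ[μ.restrict Ω] ρ) (hρ'_nonneg : 0 ≤ᵐ[μ.restrict Ω] ρ')
    (hdist : ∀ r : ℝ, μ {x ∈ Ω | r ≤ ρ' x} = μ {x ∈ Ω | r ≤ ρ x}) :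
    ∫⁻ x in Ω, ENNReal.ofReal (ρ x) * g x ∂μ ≤ ∫⁻ x in Ω, ENNReal.ofReal (ρ' x) * g x ∂μ := by
  rw [setLIntegral_ofReal_mul_eq_lintegral_Ioi hρ hg hρ_nonneg,
    setLIntegral_ofReal_mul_eq_lintegral_Ioi hρ' hg hρ'_nonneg]
  refine lintegral_mono fun s => ?_
  refine setLIntegral_le_setLIntegral_of_measure_eq
    (hΩ.inter (measurableSet_le measurable_const hρ'))
    (hΩ.inter (measurableSet_le measurable_const hρ)) (hdist s).symm
    (ne_top_of_le_ne_top hΩ_fin (measure_mono (sep_subset _ _))) ?_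
  rintro x ⟨hxΩ, hsx⟩ y ⟨⟨hyΩ, -⟩, hsy⟩
  exact hanti hyΩ hxΩ ((not_le.1 fun h => hsy ⟨hyΩ, h⟩).trans_le hsx)

theorem AntivaryOn.setIntegral_mul_le {Ω : Set α} (hΩ : MeasurableSet Ω)
    (hΩ_fin : μ Ω ≠ ∞) {ρ ρ' f : α → ℝ} (hanti : AntivaryOn f ρ Ω)
    (hρ : Measurable ρ) (hρ' : Measurable ρ') (hf : Measurable f)
    (hρ_nonneg : 0 ≤ᵐ[μ.restrict Ω] ρ) (hρ'_nonneg : 0 ≤ᵐ[μ.restrict Ω] ρ')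
    (hf_nonneg : ∀ x ∈ Ω, 0 ≤ f x) (hρ'f : IntegrableOn (fun x => ρ' x * f x) Ω μ)
    (hdist : ∀ r : ℝ, μ {x ∈ Ω | r ≤ ρ' x} = μ {x ∈ Ω | r ≤ ρ x}) :
    ∫ x in Ω, ρ x * f x ∂μ ≤ ∫ x in Ω, ρ' x * f x ∂μ := by
  have hf_nonneg' : 0 ≤ᵐ[μ.restrict Ω] f := ae_restrict_of_forall_mem hΩ hf_nonneg
  have hmul : ∀ σ : α → ℝ, 0 ≤ᵐ[μ.restrict Ω] σ →
      0 ≤ᵐ[μ.restrict Ω] (fun x => σ x * f x) ∧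
      ∫⁻ x in Ω, ENNReal.ofReal (σ x * f x) ∂μ =
        ∫⁻ x in Ω, ENNReal.ofReal (σ x) * ENNReal.ofReal (f x) ∂μ := fun σ hσ =>
    ⟨by filter_upwards [hσ, hf_nonneg'] with x h₁ h₂ using mul_nonneg h₁ h₂,
      lintegral_congr_ae (by filter_upwards [hσ] with x hx using ENNReal.ofReal_mul hx)⟩
  rw [integral_eq_lintegral_of_nonneg_ae (hmul ρ hρ_nonneg).1 (hρ.mul hf).aestronglyMeasurable,
    integral_eq_lintegral_of_nonneg_ae (hmul ρ' hρ'_nonneg).1 (hρ'.mul hf).aestronglyMeasurable]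
  refine ENNReal.toReal_mono hρ'f.lintegral_lt_top.ne ?_
  rw [(hmul ρ hρ_nonneg).2, (hmul ρ' hρ'_nonneg).2]
  exact (hanti.comp_monotone_on_left ENNReal.ofReal_mono).setLIntegral_ofReal_mul_le hΩ hΩ_fin
    hρ hρ' hf.ennreal_ofReal hρ_nonneg hρ'_nonneg hdist

theorem ae_restrict_mem_Icc_of_measure_sep_le_eq {Ω : Set α} (hΩ : MeasurableSet Ω)
    (hΩ_fin : μ Ω ≠ ∞) {ρ ρ' : α → ℝ} (hρ' : Measurable ρ')
    (hdist : ∀ r : ℝ, μ {x ∈ Ω | r ≤ ρ' x} = μ {x ∈ Ω | r ≤ ρ x}) {a b : ℝ}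
    (hρ : ∀ x ∈ Ω, ρ x ∈ Icc a b) :
    ∀ᵐ x ∂μ.restrict Ω, ρ' x ∈ Icc a b := by
  have hlow : μ (Ω \ {x ∈ Ω | a ≤ ρ' x}) = 0 := by
    have hm : MeasurableSet {x ∈ Ω | a ≤ ρ' x} := hΩ.inter (measurableSet_le measurable_const hρ')
    rw [measure_sdiff (sep_subset _ _) hm.nullMeasurableSet
      (ne_top_of_le_ne_top hΩ_fin (measure_mono (sep_subset _ _))), hdist a,
      sep_eq_self_iff_mem_true.2 fun x hx => (hρ x hx).1, tsub_self]
  have hup : μ {x ∈ Ω | b < ρ' x} = 0 := by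
    rw [sep_lt_eq_iUnion_sep_add_le]
    refine measure_iUnion_null fun n => ?_
    rw [hdist, ← measure_empty (μ := μ)]
    congr 1
    refine eq_empty_iff_forall_notMem.2 fun x ⟨hx, hbx⟩ => ?_
    linarith [(hρ x hx).2, Nat.one_div_pos_of_nat (α := ℝ) (n := n)]
  rw [ae_restrict_iff' hΩ]
  filter_upwards [measure_eq_zero_iff_ae_notMem.1 hlow, measure_eq_zero_iff_ae_notMem.1 hup]
    with x hxlow hxup hx
  exact ⟨not_not.1 fun h => hxlow ⟨hx, fun h' => h h'.2⟩, not_lt.1 fun h => hxup ⟨hx, h⟩⟩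

end Rearrangement

/-- Lemma on the minimization problem `inf_{ρ ∈ P} ∫_Ω ρ f`.
Let `f ∈ L¹(Ω)` be nonnegative with all its level sets of measure zero. With the
thresholds `t i = sup {s | |{x ∈ Ω \ (D̂ 0 ∪ ⋯ ∪ D̂ (i-1)) : f x ≥ s}| ≥ S i}` and the
super-level sets `D̂ i = {x ∈ Ω \ (D̂ 0 ∪ ⋯ ∪ D̂ (i-1)) : f x ≥ t i}` for `i < m - 1`,
and `D̂ (m-1)` the remainder, one has `|D̂ i| = S i` for all `i`, the step function
`ρ̂ = ∑ i, c i • χ_{D̂ i}` is a rearrangement of `ρ₀ = ∑ i, c i • χ_{D i}`, and `ρ̂`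
minimizes `ρ ↦ ∫_Ω ρ f` over the rearrangement class of `ρ₀`. -/
theorem stmt5 {N m : ℕ} (hm : 0 < m)
    (Ω : Set (EuclideanSpace ℝ (Fin N)))
    (hΩ_meas : MeasurableSet Ω) (hΩ_bd : Bornology.IsBounded Ω)
    (c : Fin m → ℝ) (hc_pos : ∀ i, 0 < c i) (hc_mono : StrictMono c)
    (S : Fin m → ℝ) (hS_pos : ∀ i, 0 < S i)
    (D : Fin m → Set (EuclideanSpace ℝ (Fin N)))
    (hD_meas : ∀ i, MeasurableSet (D i))
    (hD_disj : Pairwise (Function.onFun Disjoint D))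
    (hD_union : (⋃ i, D i) = Ω)
    (hD_vol : ∀ i, volume (D i) = ENNReal.ofReal (S i))
    (f : EuclideanSpace ℝ (Fin N) → ℝ) (hf_meas : Measurable f)
    (hf_int : IntegrableOn f Ω) (hf_nonneg : ∀ x ∈ Ω, 0 ≤ f x)
    (hf_level : ∀ a : ℝ, volume {x ∈ Ω | f x = a} = 0)
    (t : Fin m → ℝ) (Dhat : Fin m → Set (EuclideanSpace ℝ (Fin N)))
    (ht : ∀ i : Fin m, (i : ℕ) < m - 1 →
      t i = sSup {s : ℝ |
        ENNReal.ofReal (S i) ≤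
          volume {x ∈ Ω \ ⋃ j, ⋃ (_ : j < i), Dhat j | s ≤ f x}})
    (hDhat : ∀ i : Fin m, (i : ℕ) < m - 1 →
      Dhat i = {x ∈ Ω \ ⋃ j, ⋃ (_ : j < i), Dhat j | t i ≤ f x})
    (hDlast : ∀ i : Fin m, (i : ℕ) = m - 1 →
      Dhat i = Ω \ ⋃ j, ⋃ (_ : j < i), Dhat j) :
    (∀ i, volume (Dhat i) = ENNReal.ofReal (S i)) ∧
    (∀ r : ℝ,
      volume {x ∈ Ω | r ≤ ∑ i, (Dhat i).indicator (fun _ => c i) x} =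
        volume {x ∈ Ω | r ≤ ∑ i, (D i).indicator (fun _ => c i) x}) ∧
    (∀ ρ : EuclideanSpace ℝ (Fin N) → ℝ, Measurable ρ →
      (∀ r : ℝ, volume {x ∈ Ω | r ≤ ρ x} =
        volume {x ∈ Ω | r ≤ ∑ i, (D i).indicator (fun _ => c i) x}) →
      ∫ x in Ω, (∑ i, (Dhat i).indicator (fun _ => c i) x) * f x ≤
        ∫ x in Ω, ρ x * f x) := by
  have hA : IsGreedyPartition Ω f t Dhat := ⟨hDhat, hDlast⟩
  have hΩ_fin : volume Ω ≠ ∞ := hΩ_bd.measure_lt_top.ne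
  have hΩ_vol : volume Ω = ∑ i, ENNReal.ofReal (S i) := by
    rw [← hD_union, measure_iUnion hD_disj hD_meas, tsum_fintype]
    exact Finset.sum_congr rfl fun i _ => hD_vol i
  have hvol := hA.measure_eq hΩ_meas hf_meas hS_pos hΩ_vol hΩ_fin hf_level hf_nonneg ht
  have hA_meas := hA.measurableSet hΩ_meas hf_meas
  have hdist : ∀ r : ℝ,
      volume {x ∈ Ω | r ≤ ∑ i, (Dhat i).indicator (fun _ => c i) x} =
        volume {x ∈ Ω | r ≤ ∑ i, (D i).indicator (fun _ => c i) x} := fun r => by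
    rw [measure_sep_le_sum_indicator _ hA_meas hA.pairwise_disjoint (hA.iUnion_eq hm),
      measure_sep_le_sum_indicator _ hD_meas hD_disj hD_union]
    simp only [hvol, hD_vol]
  refine ⟨hvol, hdist, fun ρ hρ hρ_dist => ?_⟩
  have hc_mem : ∀ i, c i ∈ Icc 0 (∑ j, c j) := fun i =>
    ⟨(hc_pos i).le, Finset.single_le_sum (fun j _ => (hc_pos j).le) (Finset.mem_univ i)⟩
  have hρhat_meas : Measurable fun x => ∑ i, (Dhat i).indicator (fun _ => c i) x :=
    Finset.measurable_sum _ fun i _ => measurable_const.indicator (hA_meas i)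
  have hρhat_nonneg : 0 ≤ᵐ[volume.restrict Ω] fun x => ∑ i, (Dhat i).indicator (fun _ => c i) x :=
    ae_restrict_of_forall_mem hΩ_meas fun x hx =>
      (sum_indicator_mem_of_forall_mem hA.pairwise_disjoint (hA.iUnion_eq hm) hc_mem hx).1
  have hρhat_anti : AntivaryOn f (fun x => ∑ i, (Dhat i).indicator (fun _ => c i) x) Ω :=
    antivaryOn_sum_indicator hA.pairwise_disjoint (hA.iUnion_eq hm) hc_mono.monotone
      fun i j hij x hx y hy => hA.apply_le_of_lt hij hx hy
  have hρ_mem := ae_restrict_mem_Icc_of_measure_sep_le_eq hΩ_meas hΩ_fin hρ hρ_dist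
    fun x => sum_indicator_mem_of_forall_mem hD_disj hD_union hc_mem
  have hρf : IntegrableOn (fun x => ρ x * f x) Ω :=
    hf_int.bdd_mul hρ.aestronglyMeasurable (c := ∑ j, c j)
      (hρ_mem.mono fun x hx => (Real.norm_of_nonneg hx.1).trans_le hx.2)
  exact hρhat_anti.setIntegral_mul_le hΩ_meas hΩ_fin hρhat_meas hρ hf_meas hρhat_nonneg
    (hρ_mem.mono fun x hx => hx.1) hf_nonneg hρf fun r => (hρ_dist r).trans (hdist r).symm
end

section
/- Let f ∈ L¹(Ω) be nonnegative with all level sets {x ∈ Ω : f(x) = c} of Lebesgue measure zero, and let S₁, …, S_{m-1} > 0 with S₁ + ⋯ + S_m = |Ω|. Define t₁ = sup{s ∈ ℝ : |{x ∈ Ω : f(x) ≥ s}| ≥ S₁}, D̂₁ = {x ∈ Ω : f(x) ≥ t₁}, and recursively t_i = sup{s ∈ ℝ : |{x ∈ Ω \ (D̂₁ ∪ ⋯ ∪ D̂_{i−1}) : f(x) ≥ s}| ≥ S_i} and D̂_i = {x ∈ Ω \ (D̂₁ ∪ ⋯ ∪ D̂_{i−1}) : f(x) ≥ t_i} for i =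 2, …, m−1. Then the thresholds are strictly decreasing: t₁ > t₂ > ⋯ > t_{m−1}. -/
/-!
On a set `E` of finite measure, `s ↦ |{x ∈ E | s ≤ f x}|` is antitone, tends to `0` at `+∞`
(`f` is real-valued) and is continuous: continuity from above gives left-continuity, and
continuity from below gives right-continuity up to the level set `{f = s}`, which is null.
Hence the threshold at level `0 < S ≤ |E|` cuts off a set of measure exactly `S`.
By induction `|D̂ j| = S j` for `j < i`, so the part of `Ω` still left at step `i` has measure
at least `|Ω| - ∑_{j<i} S j ≥ S i`, and `|D̂ i| = S i > 0`. If `t i ≤ t j` for some `i < j`,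
every point of `D̂ j` would already lie in `D̂ i`, which is removed before step `j`; so `D̂ j`
would be empty.
-/

open MeasureTheory Set Filter Topology
open scoped ENNReal

section Superlevel

variable {α : Type*} [MeasurableSpace α] {μ : Measure α} {E : Set α} {f : α → ℝ}
  {a : ℝ≥0∞} {T : ℝ}

lemma measure_superlevel_le_of_forall_gt (h : ∀ s, T < s → μ {x ∈ E | s ≤ f x} ≤ a)
    (hT : μ {x ∈ E | f x = T} = 0) : μ {x ∈ E | T ≤ f x} ≤ a := by
  have hunion : {x ∈ E | T < f x} = ⋃ n : ℕ, {x ∈ E | T + 1 / (n + 1) ≤ f x} := by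
    ext x
    simp only [mem_ofPred_eq, mem_iUnion]
    constructor
    · rintro ⟨hx, hTx⟩
      obtain ⟨n, hn⟩ := exists_nat_one_div_lt (sub_pos.2 hTx)
      exact ⟨n, hx, by linarith⟩
    · rintro ⟨n, hx, hn⟩
      exact ⟨hx, lt_of_lt_of_le (lt_add_of_pos_right T Nat.one_div_pos_of_nat) hn⟩
  have hmono : Monotone fun n : ℕ ↦ {x ∈ E | T + 1 / (n + 1) ≤ f x} :=
    fun m n hmn x hx ↦ ⟨hx.1, le_trans (by gcongr) hx.2⟩
  calc μ {x ∈ E | T ≤ f x} ≤ μ ({x ∈ E | T < f x} ∪ {x ∈ E | f x = T}) :=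
        measure_mono fun x ⟨hx, hTx⟩ ↦ hTx.lt_or_eq.imp (⟨hx, ·⟩) (⟨hx, ·.symm⟩)
    _ ≤ μ {x ∈ E | T < f x} := (measure_union_le _ _).trans (by rw [hT, add_zero])
    _ ≤ a := by
      rw [hunion, hmono.measure_iUnion]
      exact iSup_le fun n ↦ h _ (lt_add_of_pos_right T Nat.one_div_pos_of_nat)

lemma le_measure_superlevel_of_forall_lt (hE : MeasurableSet E) (hf : Measurable f)
    (hfin : μ E ≠ ∞) (h : ∀ s < T, a ≤ μ {x ∈ E | s ≤ f x}) : a ≤ μ {x ∈ E | T ≤ f x} := by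
  have hinter : {x ∈ E | T ≤ f x} = ⋂ n : ℕ, {x ∈ E | T - 1 / (n + 1) ≤ f x} := by
    ext x
    simp only [mem_ofPred_eq, mem_iInter]
    constructor
    · rintro ⟨hx, hTx⟩ n
      exact ⟨hx, le_trans (sub_le_self T Nat.one_div_pos_of_nat.le) hTx⟩
    · intro hx
      refine ⟨(hx 0).1, le_of_forall_pos_le_add fun ε hε ↦ ?_⟩
      obtain ⟨n, hn⟩ := exists_nat_one_div_lt hε
      linarith [(hx n).2]
  have hanti : Antitone fun n : ℕ ↦ {x ∈ E | T - 1 / (n + 1) ≤ f x} :=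
    fun m n hmn x hx ↦ ⟨hx.1, le_trans (by gcongr) hx.2⟩
  rw [hinter, hanti.measure_iInter
    (fun n ↦ (hE.inter (measurableSet_le measurable_const hf)).nullMeasurableSet)
    ⟨0, ne_top_of_le_ne_top hfin (measure_mono (sep_subset _ _))⟩]
  exact le_iInf fun n ↦ h _ (sub_lt_self T Nat.one_div_pos_of_nat)

lemma bddAbove_setOf_le_measure_superlevel (hE : MeasurableSet E) (hf : Measurable f)
    (hfin : μ E ≠ ∞) (ha : a ≠ 0) : BddAbove {s | a ≤ μ {x ∈ E | s ≤ f x}} := by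
  have hanti : Antitone fun s : ℝ ↦ {x ∈ E | s ≤ f x} :=
    fun r s hrs x hx ↦ ⟨hx.1, hrs.trans hx.2⟩
  have hempty : ⋂ s : ℝ, {x ∈ E | s ≤ f x} = ∅ :=
    eq_empty_of_forall_notMem fun x hx ↦
      (lt_add_one (f x)).not_ge (mem_iInter.1 hx (f x + 1)).2
  have htendsto : Tendsto (fun s ↦ μ {x ∈ E | s ≤ f x}) atTop (𝓝 0) := by
    simpa only [Function.comp_def, hempty, measure_empty] using tendsto_measure_iInter_atTop
      (s := fun s : ℝ ↦ {x ∈ E | s ≤ f x})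
      (fun s ↦ (hE.inter (measurableSet_le measurable_const hf)).nullMeasurableSet) hanti
      ⟨0, ne_top_of_le_ne_top hfin (measure_mono (sep_subset _ _))⟩
  obtain ⟨s₀, hs₀⟩ :=
    eventually_atTop.1 (htendsto.eventually_lt_const (pos_iff_ne_zero.2 ha))
  exact ⟨s₀, fun s hs ↦ le_of_not_gt fun hlt ↦ (hs₀ s hlt.le).not_ge hs⟩

noncomputable def superlevelThreshold (μ : Measure α) (E : Set α) (f : α → ℝ) (a : ℝ≥0∞) : ℝ :=
  sSup {s | a ≤ μ {x ∈ E | s ≤ f x}}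

lemma measure_superlevel_superlevelThreshold (hE : MeasurableSet E) (hf : Measurable f)
    (hfin : μ E ≠ ∞) (hf₀ : ∀ x ∈ E, 0 ≤ f x) (hlevel : ∀ c, μ {x ∈ E | f x = c} = 0)
    (ha : a ≠ 0) (haE : a ≤ μ E) :
    μ {x ∈ E | superlevelThreshold μ E f a ≤ f x} = a := by
  unfold superlevelThreshold
  set A := {s | a ≤ μ {x ∈ E | s ≤ f x}}
  have hbdd : BddAbove A := bddAbove_setOf_le_measure_superlevel hE hf hfin ha
  have hne : A.Nonempty :=
    ⟨0, by rwa [mem_ofPred_eq, sep_eq_self_iff_mem_true.2 hf₀]⟩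
  refine le_antisymm (measure_superlevel_le_of_forall_gt (fun s hs ↦ ?_) (hlevel _))
    (le_measure_superlevel_of_forall_lt hE hf hfin fun s hs ↦ ?_)
  · have hsA : s ∉ A := notMem_of_csSup_lt hs hbdd
    exact (not_le.1 hsA).le
  · obtain ⟨r, hr, hsr⟩ := exists_lt_of_lt_csSup hne hs
    exact hr.trans (measure_mono fun x hx ↦ ⟨hx.1, hsr.le.trans hx.2⟩)

end Superlevel

section Greedy

variable {α : Type*} {Ω : Set α} {f : α → ℝ} {m : ℕ} {S t : Fin m → ℝ} {D : Fin m → Set α}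
  {i j : Fin m}

def remainingSet (Ω : Set α) (D : Fin m → Set α) (i : Fin m) : Set α :=
  Ω \ ⋃ j, ⋃ (_ : j < i), D j

lemma remainingSet_subset : remainingSet Ω D i ⊆ Ω := sdiff_subset

lemma remainingSet_subset_of_le (hij : i ≤ j) : remainingSet Ω D j ⊆ remainingSet Ω D i :=
  sdiff_subset_sdiff_right <| iUnion₂_mono' fun k hki ↦ ⟨k, hki.trans_le hij, subset_rfl⟩

lemma disjoint_remainingSet (hij : i < j) : Disjoint (D i) (remainingSet Ω D j) :=
  disjoint_sdiff_right.mono_left <| subset_iUnion₂_of_subset i hij subset_rfl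

lemma piece_eq_empty_of_threshold_le
    (hD : ∀ i : Fin m, (i : ℕ) < m - 1 → D i = {x ∈ remainingSet Ω D i | t i ≤ f x})
    (hij : i < j) (hj : (j : ℕ) < m - 1) (hle : t i ≤ t j) : D j = ∅ := by
  have hi : (i : ℕ) < m - 1 := lt_trans hij hj
  refine eq_empty_of_subset_empty fun x hx ↦ ?_
  rw [hD j hj] at hx
  have hxi : x ∈ D i := by
    rw [hD i hi]
    exact ⟨remainingSet_subset_of_le hij.le hx.1, hle.trans hx.2⟩
  exact (disjoint_remainingSet hij).notMem_of_mem_left hxi hx.1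

variable [MeasurableSpace α] {μ : Measure α}

lemma measurableSet_remainingSet (hΩ : MeasurableSet Ω) (hf : Measurable f)
    (hD : ∀ i : Fin m, (i : ℕ) < m - 1 → D i = {x ∈ remainingSet Ω D i | t i ≤ f x})
    (i : Fin m) : MeasurableSet (remainingSet Ω D i) := by
  induction i using WellFoundedLT.induction with
  | _ i ih =>
    refine hΩ.diff <| .iUnion fun j ↦ .iUnion fun hji ↦ ?_
    rw [hD j (by omega)]
    exact (ih j hji).inter (measurableSet_le measurable_const hf)

lemma ofReal_le_measure_remainingSet (hS : ∀ i, 0 ≤ S i)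
    (hΩ : ENNReal.ofReal (∑ i, S i) = μ Ω) (hD : ∀ j < i, μ (D j) ≤ ENNReal.ofReal (S j)) :
    ENNReal.ofReal (S i) ≤ μ (remainingSet Ω D i) := by
  have hunion : ⋃ j, ⋃ (_ : j < i), D j = ⋃ j ∈ Finset.Iio i, D j := by
    simp only [Finset.mem_Iio]
  have hcover : μ Ω ≤ μ (remainingSet Ω D i) + ENNReal.ofReal (∑ j ∈ Finset.Iio i, S j) :=
    calc μ Ω ≤ μ (remainingSet Ω D i) + μ (⋃ j ∈ Finset.Iio i, D j) := by
          rw [← hunion]; exact tsub_le_iff_right.1 le_measure_sdiff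
      _ ≤ μ (remainingSet Ω D i) + ∑ j ∈ Finset.Iio i, ENNReal.ofReal (S j) := by
          gcongr
          exact (measure_biUnion_finset_le _ _).trans
            (Finset.sum_le_sum fun j hj ↦ hD j (Finset.mem_Iio.1 hj))
      _ = _ := by rw [ENNReal.ofReal_sum_of_nonneg fun j _ ↦ hS j]
  have hsum : S i + ∑ j ∈ Finset.Iio i, S j ≤ ∑ j, S j := by
    rw [← Finset.sum_insert Finset.notMem_Iio_self]
    exact Finset.sum_le_univ_sum_of_nonneg hS
  refine ENNReal.le_of_add_le_add_right (a := ENNReal.ofReal (∑ j ∈ Finset.Iio i, S j))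
    ENNReal.ofReal_ne_top ?_
  calc ENNReal.ofReal (S i) + ENNReal.ofReal (∑ j ∈ Finset.Iio i, S j)
      ≤ ENNReal.ofReal (∑ j, S j) := by
        rw [← ENNReal.ofReal_add (hS i) (Finset.sum_nonneg fun j _ ↦ hS j)]
        exact ENNReal.ofReal_le_ofReal hsum
    _ ≤ _ := hΩ ▸ hcover

lemma measure_piece_eq_ofReal (hΩ : MeasurableSet Ω) (hf : Measurable f)
    (hf₀ : ∀ x ∈ Ω, 0 ≤ f x) (hlevel : ∀ c, μ {x ∈ Ω | f x = c} = 0)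
    (hS : ∀ i, 0 ≤ S i) (hS_pos : ∀ i : Fin m, (i : ℕ) < m - 1 → 0 < S i)
    (hS_sum : ENNReal.ofReal (∑ i, S i) = μ Ω) (ht : ∀ i : Fin m, (i : ℕ) < m - 1 →
      t i = superlevelThreshold μ (remainingSet Ω D i) f (ENNReal.ofReal (S i)))
    (hD : ∀ i : Fin m, (i : ℕ) < m - 1 → D i = {x ∈ remainingSet Ω D i | t i ≤ f x})
    (i : Fin m) (hi : (i : ℕ) < m - 1) : μ (D i) = ENNReal.ofReal (S i) := by
  induction i using WellFoundedLT.induction with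
  | _ i ih =>
    have hfin : μ (remainingSet Ω D i) ≠ ∞ :=
      ne_top_of_le_ne_top (hS_sum ▸ ENNReal.ofReal_ne_top) (measure_mono remainingSet_subset)
    have hSi : ENNReal.ofReal (S i) ≤ μ (remainingSet Ω D i) :=
      ofReal_le_measure_remainingSet hS hS_sum fun j hj ↦ (ih j hj (by omega)).le
    rw [hD i hi, ht i hi]
    exact measure_superlevel_superlevelThreshold (measurableSet_remainingSet hΩ hf hD i) hf hfin
      (fun x hx ↦ hf₀ x (remainingSet_subset hx))
      (fun c ↦ measure_mono_null (t := {x ∈ Ω | f x = c})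
        (fun x hx ↦ ⟨remainingSet_subset hx.1, hx.2⟩) (hlevel c))
      (ENNReal.ofReal_pos.2 (hS_pos i hi)).ne' hSi

end Greedy

theorem stmt8_general {N m : ℕ}
    (Ω : Set (EuclideanSpace ℝ (Fin N)))
    (hΩ_meas : MeasurableSet Ω)
    (f : EuclideanSpace ℝ (Fin N) → ℝ) (hf_meas : Measurable f)
    (hf_nonneg : ∀ x ∈ Ω, 0 ≤ f x)
    (hf_level : ∀ a : ℝ, volume {x ∈ Ω | f x = a} = 0)
    (S : Fin m → ℝ)
    (hS_nonneg : ∀ i, 0 ≤ S i)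
    (hS_pos : ∀ i : Fin m, (i : ℕ) < m - 1 → 0 < S i)
    (hS_sum : ENNReal.ofReal (∑ i, S i) = volume Ω)
    (t : Fin m → ℝ) (Dhat : Fin m → Set (EuclideanSpace ℝ (Fin N)))
    (ht : ∀ i : Fin m, (i : ℕ) < m - 1 →
      t i = sSup {s : ℝ |
        ENNReal.ofReal (S i) ≤
          volume {x ∈ Ω \ ⋃ j, ⋃ (_ : j < i), Dhat j | s ≤ f x}})
    (hDhat : ∀ i : Fin m, (i : ℕ) < m - 1 →
      Dhat i = {x ∈ Ω \ ⋃ j, ⋃ (_ : j < i), Dhat j | t i ≤ f x}) :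
    ∀ i j : Fin m, i < j → (j : ℕ) < m - 1 → t j < t i := by
  intro i j hij hj
  have hμ : volume (Dhat j) = ENNReal.ofReal (S j) :=
    measure_piece_eq_ofReal hΩ_meas hf_meas hf_nonneg hf_level hS_nonneg hS_pos hS_sum ht hDhat
      j hj
  by_contra! hle
  rw [piece_eq_empty_of_threshold_le hDhat hij hj hle, measure_empty] at hμ
  exact (ENNReal.ofReal_pos.2 (hS_pos j hj)).ne hμ

/-- The thresholds `t 0 > t 1 > ⋯ > t (m-2)` appearing in the
super-level-set construction are strictly decreasing: `t i = sup {s | |{x ∈ Ω \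
(D̂ 0 ∪ ⋯ ∪ D̂ (i-1)) : f x ≥ s}| ≥ S i}`, `D̂ i = {x ∈ Ω \ (D̂ 0 ∪ ⋯ ∪ D̂ (i-1)) :
f x ≥ t i}`, where `f ∈ L¹(Ω)` is nonnegative with all its level sets of measure zero,
`S i > 0` for `i < m - 1` and `S 0 + ⋯ + S (m-1) = |Ω|`. -/
theorem stmt8 {N m : ℕ}
    (Ω : Set (EuclideanSpace ℝ (Fin N)))
    (hΩ_meas : MeasurableSet Ω) (hΩ_bd : Bornology.IsBounded Ω)
    (f : EuclideanSpace ℝ (Fin N) → ℝ) (hf_meas : Measurable f)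
    (hf_int : IntegrableOn f Ω) (hf_nonneg : ∀ x ∈ Ω, 0 ≤ f x)
    (hf_level : ∀ a : ℝ, volume {x ∈ Ω | f x = a} = 0)
    (S : Fin m → ℝ)
    (hS_nonneg : ∀ i, 0 ≤ S i)
    (hS_pos : ∀ i : Fin m, (i : ℕ) < m - 1 → 0 < S i)
    (hS_sum : ENNReal.ofReal (∑ i, S i) = volume Ω)
    (t : Fin m → ℝ) (Dhat : Fin m → Set (EuclideanSpace ℝ (Fin N)))
    (ht : ∀ i : Fin m, (i : ℕ) < m - 1 →
      t i = sSup {s : ℝ |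
        ENNReal.ofReal (S i) ≤
          volume {x ∈ Ω \ ⋃ j, ⋃ (_ : j < i), Dhat j | s ≤ f x}})
    (hDhat : ∀ i : Fin m, (i : ℕ) < m - 1 →
      Dhat i = {x ∈ Ω \ ⋃ j, ⋃ (_ : j < i), Dhat j | t i ≤ f x}) :
    ∀ i j : Fin m, i < j → (j : ℕ) < m - 1 → t j < t i :=
  stmt8_general Ω hΩ_meas f hf_meas hf_nonneg hf_level S hS_nonneg hS_pos hS_sum t Dhat ht hDhat
end
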